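/- arXiv:2209.14619 — 6 statements merged into one kernel-verified Lean document; each statement's English description precedes it below -/
import Mathlib

section
/- Let λ > 0 and let a, b be d×d real positive semidefinite symmetric matrices with a − λ²·I_d and b − λ²·I_d positive semidefinite. Then the operator norms satisfy ‖√a − √b‖ ≤ (2λ)⁻¹ ‖a − b‖, where √a, √b are the unique positive semidefinite square roots and ‖·‖ is the operator norm on ℝ^d with the Euclidean norm. -/
open scoped ComplexOrder in
/-- The positive semidefinite square root of a positive semidefinite matrix
(the definition `Matrix.PosSemidef.sqrt` of Mathlib, Dec 2024, since removed). -/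
noncomputable def Matrix.PosSemidef.sqrt {n 𝕜 : Type*} [Fintype n] [DecidableEq n] [RCLike 𝕜]
    {A : Matrix n n 𝕜} (hA : A.PosSemidef) : Matrix n n 𝕜 :=
  hA.1.eigenvectorUnitary.1 * Matrix.diagonal ((↑) ∘ Real.sqrt ∘ hA.1.eigenvalues) *
  (star hA.1.eigenvectorUnitary : Matrix n n 𝕜)

/-!
Write `S = √a`, `T = √b`. Then `a - b = S (S - T) + (S - T) T`. The self-adjoint operator
`S - T` has a unit eigenvector `v` whose eigenvalue `μ` satisfies `|μ| = ‖S - T‖`, and testing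
the identity against `v` gives `⟪(a - b) v, v⟫ = μ (⟪S v, v⟫ + ⟪T v, v⟫)`. Since `S, T ≥ λ`,
the right-hand side has absolute value at least `2 λ ‖S - T‖`, while the left-hand side is at
most `‖a - b‖`.
-/

theorem CFC.algebraMap_le_sqrt {A : Type*} [PartialOrder A] [Ring A] [StarRing A]
    [TopologicalSpace A] [Algebra ℝ A] [StarModule ℝ A]
    [ContinuousFunctionalCalculus ℝ A IsSelfAdjoint] [NonnegSpectrumClass ℝ A]
    [StarOrderedRing A] [IsSemitopologicalRing A] [T2Space A]
    {a : A} {r : ℝ} (h : algebraMap ℝ A (r ^ 2) ≤ a) : algebraMap ℝ A r ≤ CFC.sqrt a := by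
  have hr2 : 0 ≤ algebraMap ℝ A (r ^ 2) := by
    simpa [sq, (IsSelfAdjoint.algebraMap A (.all r)).star_eq] using
      star_mul_self_nonneg (algebraMap ℝ A r)
  have ha : 0 ≤ a := hr2.trans h
  rw [CFC.sqrt_eq_real_sqrt a, cfcₙ_eq_cfc, algebraMap_le_cfc_iff Real.sqrt r a]
  exact fun x hx ↦ Real.le_sqrt_of_sq_le ((algebraMap_le_iff_le_spectrum).mp h x hx)

open scoped RealInnerProductSpace

namespace ContinuousLinearMap

variable {E : Type*} [NormedAddCommGroup E] [InnerProductSpace ℝ E]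

theorem _root_.IsSelfAdjoint.exists_hasEigenvector_abs_eq_norm [FiniteDimensional ℝ E]
    [Nontrivial E] {T : E →L[ℝ] E} (hT : IsSelfAdjoint T) :
    ∃ μ v, Module.End.HasEigenvector (T : E →ₗ[ℝ] E) μ v ∧ |μ| = ‖T‖ := by
  have hspec : ∃ μ ∈ spectrum ℝ T, |μ| = ‖T‖ := by
    suffices h : algebraMap ℝ ℝ ‖T‖ ∈ spectrum ℝ T ∨ -algebraMap ℝ ℝ ‖T‖ ∈ spectrum ℝ T by
      rcases h with h | h <;> exact ⟨_, h, by simp⟩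
    -- else `|rayleighQuotient T|` stays below `‖T‖ - ε`, yet its supremum is `‖T‖`
    simp_rw [spectrum, Set.mem_compl_iff]
    by_contra! h
    obtain ⟨ε, hε, hle⟩ := T.abs_rayleighQuotient_le_of_norm_mem_resolventSet h.1 h.2
    have := T.norm_eq_iSup_rayleighQuotient hT.isSymmetric
    linarith [ciSup_le hle]
  obtain ⟨μ, hμ, habs⟩ := hspec
  rw [spectrum_eq, ← Module.End.hasEigenvalue_iff_mem_spectrum] at hμ
  obtain ⟨v, hv⟩ := hμ.exists_hasEigenvector
  exact ⟨μ, v, hv, habs⟩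

theorem mul_sq_norm_le_inner_of_algebraMap_le {S : E →L[ℝ] E} {c : ℝ}
    (hS : algebraMap ℝ (E →L[ℝ] E) c ≤ S) (x : E) : c * ‖x‖ ^ 2 ≤ ⟪S x, x⟫ := by
  simpa only [sub_apply, algebraMap_apply, inner_sub_left, real_inner_smul_left,
    real_inner_self_eq_norm_sq, sub_nonneg] using hS.inner_nonneg_left x

theorem abs_inner_apply_self_le (S : E →L[ℝ] E) (x : E) : |⟪S x, x⟫| ≤ ‖S‖ * ‖x‖ ^ 2 :=
  calc |⟪S x, x⟫| ≤ ‖S x‖ * ‖x‖ := abs_real_inner_le_norm _ _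
    _ ≤ ‖S‖ * ‖x‖ * ‖x‖ := by gcongr; exact S.le_opNorm x
    _ = ‖S‖ * ‖x‖ ^ 2 := by ring

theorem two_mul_norm_sub_le_norm_mul_self_sub [FiniteDimensional ℝ E] {S T : E →L[ℝ] E} {c : ℝ}
    (hS : algebraMap ℝ (E →L[ℝ] E) c ≤ S) (hT : algebraMap ℝ (E →L[ℝ] E) c ≤ T) :
    2 * c * ‖S - T‖ ≤ ‖S * S - T * T‖ := by
  nontriviality E
  have hD : IsSelfAdjoint (S - T) := by
    rw [← sub_sub_sub_cancel_right S T (algebraMap ℝ _ c)]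
    exact ((le_def _ _).mp hS).isSelfAdjoint.sub ((le_def _ _).mp hT).isSelfAdjoint
  obtain ⟨μ, v, hv, hμ⟩ := hD.exists_hasEigenvector_abs_eq_norm
  have hDv : (S - T) v = μ • v := hv.apply_eq_smul
  have key : ⟪(S * S - T * T) v, v⟫ = μ * (⟪S v, v⟫ + ⟪T v, v⟫) := by
    have : S * S - T * T = S * (S - T) + (S - T) * T := by noncomm_ring
    rw [this, add_apply, mul_apply_eq_comp, mul_apply_eq_comp, hDv, inner_add_left, map_smul,
      show ⟪(S - T) (T v), v⟫ = ⟪T v, (S - T) v⟫ from hD.isSymmetric _ _, hDv,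
      real_inner_smul_left, real_inner_smul_right, real_inner_comm v]
    ring
  have hv0 : 0 < ‖v‖ ^ 2 := by have := hv.2; positivity
  refine le_of_mul_le_mul_right ?_ hv0
  calc 2 * c * ‖S - T‖ * ‖v‖ ^ 2 = |μ| * (c * ‖v‖ ^ 2 + c * ‖v‖ ^ 2) := by rw [hμ]; ring
    _ ≤ |μ| * (⟪S v, v⟫ + ⟪T v, v⟫) := by
      gcongr
      exacts [mul_sq_norm_le_inner_of_algebraMap_le hS v,
        mul_sq_norm_le_inner_of_algebraMap_le hT v]
    _ ≤ |⟪(S * S - T * T) v, v⟫| := by rw [key, abs_mul]; gcongr; exact le_abs_self _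
    _ ≤ ‖S * S - T * T‖ * ‖v‖ ^ 2 := abs_inner_apply_self_le _ v

end ContinuousLinearMap

section Matrix

open scoped ComplexOrder MatrixOrder

variable {n 𝕜 : Type*} [Fintype n] [DecidableEq n] [RCLike 𝕜]

theorem Matrix.toEuclideanCLM_le_toEuclideanCLM_iff {A B : Matrix n n 𝕜} :
    toEuclideanCLM (n := n) (𝕜 := 𝕜) A ≤ toEuclideanCLM (n := n) (𝕜 := 𝕜) B ↔ A ≤ B := by
  rw [ContinuousLinearMap.le_def, ← map_sub, Matrix.le_iff]
  exact Matrix.isPositive_toEuclideanLin_iff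

theorem Matrix.PosSemidef.sqrt_eq_cfcSqrt {A : Matrix n n 𝕜} (hA : A.PosSemidef) :
    hA.sqrt = CFC.sqrt A := by
  rw [CFC.sqrt_eq_real_sqrt A hA.nonneg, cfcₙ_eq_cfc, hA.1.cfc_eq]
  rfl

theorem Matrix.PosSemidef.sqrt_mul_self {A : Matrix n n 𝕜} (hA : A.PosSemidef) :
    hA.sqrt * hA.sqrt = A := by
  rw [hA.sqrt_eq_cfcSqrt, CFC.sqrt_mul_sqrt_self A hA.nonneg]

theorem Matrix.PosSemidef.algebraMap_le_sqrt {A : Matrix n n 𝕜} (hA : A.PosSemidef) {r : ℝ}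
    (h : (A - r ^ 2 • (1 : Matrix n n 𝕜)).PosSemidef) : algebraMap ℝ _ r ≤ hA.sqrt := by
  rw [hA.sqrt_eq_cfcSqrt]
  refine CFC.algebraMap_le_sqrt ?_
  rwa [Matrix.le_iff, Algebra.algebraMap_eq_smul_one]

theorem Matrix.PosSemidef.algebraMap_le_toEuclideanCLM_sqrt {A : Matrix n n ℝ}
    (hA : A.PosSemidef) {r : ℝ} (h : (A - r ^ 2 • (1 : Matrix n n ℝ)).PosSemidef) :
    algebraMap ℝ _ r ≤ toEuclideanCLM (n := n) (𝕜 := ℝ) hA.sqrt := by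
  rw [← AlgHomClass.commutes (toEuclideanCLM (n := n) (𝕜 := ℝ)),
    toEuclideanCLM_le_toEuclideanCLM_iff]
  exact hA.algebraMap_le_sqrt h

end Matrix

/-- If `a, b` are real positive semidefinite symmetric `d×d` matrices with
`a − λ²·I` and `b − λ²·I` positive semidefinite (`λ > 0`), then the Euclidean operator
norms satisfy `‖√a − √b‖ ≤ (2λ)⁻¹ ‖a − b‖`, where `√·` denotes the unique positive
semidefinite square root. -/
theorem stmt_3 (d : ℕ) (lam : ℝ) (hlam : 0 < lam)
    (a b : Matrix (Fin d) (Fin d) ℝ) (ha : a.PosSemidef) (hb : b.PosSemidef)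
    (hal : (a - lam ^ 2 • (1 : Matrix (Fin d) (Fin d) ℝ)).PosSemidef)
    (hbl : (b - lam ^ 2 • (1 : Matrix (Fin d) (Fin d) ℝ)).PosSemidef) :
    ‖Matrix.toEuclideanCLM (𝕜 := ℝ) (ha.sqrt - hb.sqrt)‖
      ≤ (2 * lam)⁻¹ * ‖Matrix.toEuclideanCLM (𝕜 := ℝ) (a - b)‖ := by
  have key := ContinuousLinearMap.two_mul_norm_sub_le_norm_mul_self_sub
    (ha.algebraMap_le_toEuclideanCLM_sqrt hal) (hb.algebraMap_le_toEuclideanCLM_sqrt hbl)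
  rw [← map_mul, ← map_mul, ha.sqrt_mul_self, hb.sqrt_mul_self, ← map_sub, ← map_sub] at key
  rw [inv_mul_eq_div, le_div_iff₀ (by positivity)]
  linarith
end

section
/- Let A be an m×m real matrix and M an m×d real matrix satisfying the Kalman rank condition of order l for some 1 ≤ l ≤ m, i.e. the m×(l·d) block matrix [M, AM, …, A^{l−1}M] has rank m. Then for every t > 0 the Gramian Q_t := ∫₀ᵗ (s(t−s)/t²) e^{−sA} M Mᵀ e^{−sAᵀ} ds is a positive definite (in particular invertible) m×m matrix. -/
open Matrix

/-- The Gramian `Q_t := ∫₀ᵗ (s(t−s)/t²) e^{−sA} M Mᵀ e^{−sAᵀ} ds`, defined entrywise. -/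
noncomputable def gramian {m d : ℕ} (A : Matrix (Fin m) (Fin m) ℝ)
    (M : Matrix (Fin m) (Fin d) ℝ) (t : ℝ) : Matrix (Fin m) (Fin m) ℝ :=
  Matrix.of fun i j => ∫ s in (0:ℝ)..t, (s * (t - s) / t ^ 2) *
    ((NormedSpace.exp ((-s) • A)) * M * Mᵀ * (NormedSpace.exp ((-s) • A))ᵀ) i j

/-- Kalman rank condition of order `l`: the `m × (l·d)` block matrix
`[A⁰M, A¹M, …, A^{l−1}M]` has rank `m`. -/
def KalmanRank {m d : ℕ} (A : Matrix (Fin m) (Fin m) ℝ)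
    (M : Matrix (Fin m) (Fin d) ℝ) (l : ℕ) : Prop :=
  (Matrix.of fun (i : Fin m) (p : Fin l × Fin d) =>
    (A ^ (p.1 : ℕ) * M) i p.2).rank = m

open NormedSpace MeasureTheory

attribute [local instance] Matrix.linftyOpSemiNormedRing Matrix.linftyOpNormedRing
  Matrix.linftyOpNormedAlgebra

namespace StmtFourAux

variable {m d : ℕ}

/-- The linear map `N ↦ x ᵥ* (N * P)` as a continuous linear map. -/
noncomputable def Lmap (x : Fin m → ℝ) (P : Matrix (Fin m) (Fin d) ℝ) :
    Matrix (Fin m) (Fin m) ℝ →L[ℝ] (Fin d → ℝ) :=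
  LinearMap.toContinuousLinearMap
    { toFun := fun N => x ᵥ* (N * P)
      map_add' := fun N N' => by simp [Matrix.add_mul, Matrix.vecMul_add]
      map_smul' := fun c N => by
        ext j
        simp [Matrix.smul_mul, Matrix.vecMul, dotProduct, Finset.mul_sum, mul_left_comm] }

lemma dot_expand (x : Fin m → ℝ) (N : Matrix (Fin m) (Fin m) ℝ) :
    x ⬝ᵥ N *ᵥ x = ∑ p : Fin m × Fin m, x p.1 * (N p.1 p.2 * x p.2) := by
  rw [Fintype.sum_prod_type]
  simp [dotProduct, Matrix.mulVec, Finset.mul_sum]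

lemma kalman_inj {l : ℕ} (A : Matrix (Fin m) (Fin m) ℝ) (M : Matrix (Fin m) (Fin d) ℝ)
    (hK : KalmanRank A M l) {y : Fin m → ℝ}
    (hy : ∀ k : Fin l, y ᵥ* (A ^ (k : ℕ) * M) = 0) : y = 0 := by
  set K : Matrix (Fin m) (Fin l × Fin d) ℝ :=
    Matrix.of fun (i : Fin m) (p : Fin l × Fin d) => (A ^ (p.1 : ℕ) * M) i p.2 with hKdef
  have hK' : K.rank = m := hK
  have hrank : Kᵀ.rank = m := by rw [Matrix.rank_transpose]; exact hK'
  have hrn := LinearMap.finrank_range_add_finrank_ker (Kᵀ.mulVecLin)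
  rw [Module.finrank_pi, Fintype.card_fin] at hrn
  rw [Matrix.rank] at hrank
  have hker0 : Module.finrank ℝ (LinearMap.ker Kᵀ.mulVecLin) = 0 := by omega
  have hker : LinearMap.ker Kᵀ.mulVecLin = ⊥ := Submodule.finrank_eq_zero.mp hker0
  have hmem : Kᵀ.mulVecLin y = 0 := by
    funext p
    have h := congrFun (hy p.1) p.2
    simpa [Matrix.mulVecLin_apply, Matrix.mulVec, Matrix.vecMul, dotProduct,
      Matrix.transpose_apply, hKdef, mul_comm] using h
  have : y ∈ LinearMap.ker Kᵀ.mulVecLin := LinearMap.mem_ker.mpr hmem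
  rw [hker] at this
  simpa using this

lemma vanish_succ (A : Matrix (Fin m) (Fin m) ℝ) (M : Matrix (Fin m) (Fin d) ℝ)
    {t : ℝ} (x : Fin m → ℝ) (k : ℕ)
    (ih : ∀ s ∈ Set.Ioo (0:ℝ) t, x ᵥ* (exp (s • (-A)) * (A ^ k * M)) = 0) :
    ∀ s ∈ Set.Ioo (0:ℝ) t, x ᵥ* (exp (s • (-A)) * (A ^ (k + 1) * M)) = 0 := by
  intro s hs
  have hd : HasDerivAt (fun r : ℝ => x ᵥ* (exp (r • (-A)) * (A ^ k * M)))
      (x ᵥ* (((-A) * exp (s • (-A))) * (A ^ k * M))) s :=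
    (Lmap x (A ^ k * M)).hasFDerivAt.comp_hasDerivAt s (hasDerivAt_exp_smul_const' (-A) s)
  have h0 : HasDerivAt (fun r : ℝ => x ᵥ* (exp (r • (-A)) * (A ^ k * M)))
      (0 : Fin d → ℝ) s := by
    refine (hasDerivAt_const s (0 : Fin d → ℝ)).congr_of_eventuallyEq ?_
    filter_upwards [isOpen_Ioo.mem_nhds hs] with r hr
    exact ih r hr
  have huniq : (0 : Fin d → ℝ) = x ᵥ* (((-A) * exp (s • (-A))) * (A ^ k * M)) :=
    h0.unique hd
  have hcommA : A * exp (s • (-A)) = exp (s • (-A)) * A := by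
    have h1 : Commute A (s • (-A)) := ((Commute.refl A).neg_right).smul_right s
    exact (h1.exp_right).eq
  have hrw : ((-A) * exp (s • (-A))) * (A ^ k * M)
      = -(exp (s • (-A)) * (A ^ (k + 1) * M)) := by
    calc ((-A) * exp (s • (-A))) * (A ^ k * M)
        = -(A * exp (s • (-A)) * (A ^ k * M)) := by rw [Matrix.neg_mul, Matrix.neg_mul]
      _ = -(exp (s • (-A)) * A * (A ^ k * M)) := by rw [hcommA]
      _ = -(exp (s • (-A)) * (A ^ (k + 1) * M)) := by
          rw [Matrix.mul_assoc, ← Matrix.mul_assoc A, ← pow_succ']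
  rw [hrw, Matrix.vecMul_neg] at huniq
  exact neg_eq_zero.mp huniq.symm

end StmtFourAux

open StmtFourAux

/-- under the Kalman rank condition of order `l` (`1 ≤ l ≤ m`), for every
`t > 0` the Gramian `Q_t` is positive definite (in particular invertible). -/
theorem stmt_4 (m d l : ℕ) (A : Matrix (Fin m) (Fin m) ℝ)
    (M : Matrix (Fin m) (Fin d) ℝ) (hl1 : 1 ≤ l) (hlm : l ≤ m)
    (hK : KalmanRank A M l) :
    ∀ t : ℝ, 0 < t → (gramian A M t).PosDef := by
  intro t ht
  have hEc : Continuous fun s : ℝ => exp ((-s) • A) :=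
    exp_continuous.comp (continuous_neg.smul continuous_const)
  have hEs : ∀ s : ℝ, exp ((-s) • A) = exp (s • (-A)) := fun s => by
    rw [neg_smul, smul_neg]
  set C : ℝ → Matrix (Fin m) (Fin m) ℝ :=
    fun s => exp ((-s) • A) * M * Mᵀ * (exp ((-s) • A))ᵀ with hC
  have hCc : Continuous C :=
    ((hEc.matrix_mul continuous_const).matrix_mul continuous_const).matrix_mul
      hEc.matrix_transpose
  have hCsymm : ∀ s, (C s)ᵀ = C s := fun s => by
    simp [hC, Matrix.transpose_mul, Matrix.mul_assoc]
  set w : ℝ → ℝ := fun s => s * (t - s) / t ^ 2 with hw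
  have hQ : ∀ i j, gramian A M t i j = ∫ s in (0:ℝ)..t, w s * C s i j := fun i j => rfl
  have hwc : Continuous w := by fun_prop
  refine Matrix.PosDef.of_dotProduct_mulVec_pos ?_ ?_
  · -- Hermitian
    show (gramian A M t)ᴴ = gramian A M t
    ext i j
    simp only [Matrix.conjTranspose_apply, star_trivial]
    rw [hQ i j, hQ j i]
    congr 1
    funext s
    have : C s j i = C s i j := by
      conv_rhs => rw [← hCsymm s]
      simp [Matrix.transpose_apply]
    rw [this]
  · intro x hx
    have hsx : star x = x := by funext i; simp
    set u : ℝ → Fin d → ℝ := fun s => x ᵥ* (exp ((-s) • A) * M) with hu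
    set g : ℝ → ℝ := fun s => w s * (u s ⬝ᵥ u s) with hg
    have huc : Continuous u :=
      continuous_const.matrix_vecMul (hEc.matrix_mul continuous_const)
    have hgc : Continuous g := hwc.mul (huc.dotProduct huc)
    have hint : ∀ p : Fin m × Fin m, IntervalIntegrable
        (fun s => x p.1 * (w s * C s p.1 p.2 * x p.2)) volume 0 t := fun p =>
      (continuous_const.mul
        ((hwc.mul (hCc.matrix_elem p.1 p.2)).mul continuous_const)).intervalIntegrable _ _
    have hquad : x ⬝ᵥ (gramian A M t) *ᵥ x = ∫ s in (0:ℝ)..t, g s := by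
      rw [dot_expand]
      have h2 : ∀ p : Fin m × Fin m, x p.1 * (gramian A M t p.1 p.2 * x p.2)
          = ∫ s in (0:ℝ)..t, x p.1 * (w s * C s p.1 p.2 * x p.2) := by
        intro p
        rw [hQ p.1 p.2, ← intervalIntegral.integral_mul_const,
          ← intervalIntegral.integral_const_mul]
      simp_rw [h2]
      rw [← intervalIntegral.integral_finset_sum (fun p _ => hint p)]
      apply intervalIntegral.integral_congr
      intro s _
      have hBB : C s = (exp ((-s) • A) * M) * (exp ((-s) • A) * M)ᵀ := by
        simp [hC, Matrix.transpose_mul, Matrix.mul_assoc]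
      have hxCx : x ⬝ᵥ C s *ᵥ x = u s ⬝ᵥ u s := by
        rw [hBB]
        set B := exp ((-s) • A) * M
        calc x ⬝ᵥ (B * Bᵀ) *ᵥ x = ((x ᵥ* B) ᵥ* Bᵀ) ⬝ᵥ x := by
              rw [Matrix.dotProduct_mulVec, Matrix.vecMul_vecMul]
          _ = (B *ᵥ (x ᵥ* B)) ⬝ᵥ x := by rw [Matrix.vecMul_transpose]
          _ = x ⬝ᵥ (B *ᵥ (x ᵥ* B)) := dotProduct_comm _ _
          _ = (x ᵥ* B) ⬝ᵥ (x ᵥ* B) := by rw [Matrix.dotProduct_mulVec]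
          _ = u s ⬝ᵥ u s := rfl
      calc ∑ p : Fin m × Fin m, x p.1 * (w s * C s p.1 p.2 * x p.2)
          = w s * ∑ p : Fin m × Fin m, x p.1 * (C s p.1 p.2 * x p.2) := by
            rw [Finset.mul_sum]; exact Finset.sum_congr rfl fun p _ => by ring
        _ = w s * (x ⬝ᵥ C s *ᵥ x) := by rw [← dot_expand]
        _ = g s := by rw [hxCx]
    have hdotnn : ∀ s, (0:ℝ) ≤ u s ⬝ᵥ u s := fun s =>
      Finset.sum_nonneg fun i _ => mul_self_nonneg _
    have hgnn : ∀ s ∈ Set.Icc (0:ℝ) t, 0 ≤ g s := by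
      intro s hs
      apply mul_nonneg _ (hdotnn s)
      apply div_nonneg (mul_nonneg hs.1 (by linarith [hs.2])) (by positivity)
    have hInn : (0:ℝ) ≤ ∫ s in (0:ℝ)..t, g s :=
      intervalIntegral.integral_nonneg ht.le hgnn
    rw [hsx, hquad]
    rcases hInn.lt_or_eq with hlt | heq
    · exact hlt
    · exfalso
      have hgint : IntervalIntegrable g volume 0 t := hgc.intervalIntegrable _ _
      have hIoc0 : Set.Ioc t (0:ℝ) = ∅ := Set.Ioc_eq_empty (by linarith)
      have hae : g =ᵐ[volume.restrict (Set.Ioc (0:ℝ) t ∪ Set.Ioc t 0)] 0 := by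
        apply (intervalIntegral.integral_eq_zero_iff_of_nonneg_ae ?_ hgint).mp heq.symm
        rw [hIoc0, Set.union_empty]
        refine ae_restrict_of_forall_mem measurableSet_Ioc ?_
        exact fun s hs => hgnn s ⟨hs.1.le, hs.2⟩
      have hae2 : g =ᵐ[volume.restrict (Set.Ioo (0:ℝ) t)] 0 :=
        ae_restrict_of_ae_restrict_of_subset
          (Set.Ioo_subset_Ioc_self.trans Set.subset_union_left) hae
      have heqOn : Set.EqOn g 0 (Set.Ioo (0:ℝ) t) := by
        apply Measure.eqOn_of_ae_eq hae2 hgc.continuousOn continuousOn_const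
        rw [isOpen_Ioo.interior_eq]
        exact subset_closure
      have huz : ∀ s ∈ Set.Ioo (0:ℝ) t, u s = 0 := by
        intro s hs
        have hg0 : g s = 0 := heqOn hs
        have hws : 0 < w s := by
          have h1 := hs.1; have h2 := hs.2
          have : 0 < t - s := by linarith
          positivity
        have hdot : u s ⬝ᵥ u s = 0 :=
          (mul_eq_zero.mp hg0).resolve_left hws.ne'
        funext j
        have hterm := (Finset.sum_eq_zero_iff_of_nonneg
          (fun i _ => mul_self_nonneg (u s i))).mp hdot j (Finset.mem_univ j)
        simpa using mul_self_eq_zero.mp hterm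
      have hvan : ∀ k, ∀ s ∈ Set.Ioo (0:ℝ) t,
          x ᵥ* (exp (s • (-A)) * (A ^ k * M)) = 0 := by
        intro k
        induction k with
        | zero =>
          intro s hs
          have h := huz s hs
          rw [hu] at h
          simpa [pow_zero, Matrix.one_mul, hEs s] using h
        | succ k ih => exact vanish_succ A M x k ih
      have hs₀ : t / 2 ∈ Set.Ioo (0:ℝ) t := ⟨by positivity, by linarith⟩
      set y : Fin m → ℝ := x ᵥ* exp ((t / 2) • (-A)) with hy
      have hyk : ∀ k : Fin l, y ᵥ* (A ^ (k : ℕ) * M) = 0 := by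
        intro k
        have h := hvan k (t / 2) hs₀
        rwa [← Matrix.vecMul_vecMul] at h
      have hy0 : y = 0 := kalman_inj A M hK hyk
      have hx0 : x = 0 := by
        have hinj := Matrix.vecMul_injective_iff_isUnit.mpr
          (Matrix.isUnit_exp ((t / 2) • (-A)))
        apply hinj
        show x ᵥ* exp ((t / 2) • (-A)) = 0 ᵥ* exp ((t / 2) • (-A))
        rw [← hy, hy0, Matrix.zero_vecMul]
      exact hx hx0
end

section
/- In the degenerate control setting (matrices A, M, time t₀ > 0, vectors v⁽¹⁾ ∈ ℝ^m, v⁽²⁾ ∈ ℝ^d, continuous g : [0,t₀] → ℝ^d with g(0) = 0, and Q_{t₀}, V, α, u, z defined from these data), if the Gramian Q_{t₀} is invertible, then the first-component difference vanishes at the terminal time: z(t₀) = e^{t₀A} v⁽¹⁾ + ∫₀^{t₀} e^{(t₀−s)A} M u(s) ds = 0. -/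
open Matrix

/-- Matrix–vector multiplication as a map of Euclidean spaces. -/
noncomputable def mvE {a b : ℕ} (N : Matrix (Fin a) (Fin b) ℝ)
    (v : EuclideanSpace ℝ (Fin b)) : EuclideanSpace ℝ (Fin a) :=
  (WithLp.equiv 2 _).symm (N.mulVec ((WithLp.equiv 2 _) v))

/-- `V := ∫₀^{t₀} e^{−rA} M ( ((t₀−r)/t₀) v⁽²⁾ − (r/t₀) g(t₀) + g(r) ) dr`. -/
noncomputable def ctrlV {m d : ℕ} (A : Matrix (Fin m) (Fin m) ℝ)
    (M : Matrix (Fin m) (Fin d) ℝ) (t₀ : ℝ) (v₂ : EuclideanSpace ℝ (Fin d))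
    (g : ℝ → EuclideanSpace ℝ (Fin d)) : EuclideanSpace ℝ (Fin m) :=
  ∫ r in (0:ℝ)..t₀, mvE (NormedSpace.exp ((-r) • A) * M)
    (((t₀ - r) / t₀) • v₂ - (r / t₀) • g t₀ + g r)

/-- `α(s) := −(s/t₀)(g(t₀)+v⁽²⁾) − (s(t₀−s)/t₀²) Mᵀ e^{−sAᵀ} Q_{t₀}⁻¹ (v⁽¹⁾ + V)`. -/
noncomputable def ctrlAlpha {m d : ℕ} (A : Matrix (Fin m) (Fin m) ℝ)
    (M : Matrix (Fin m) (Fin d) ℝ) (t₀ : ℝ) (v₁ : EuclideanSpace ℝ (Fin m))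
    (v₂ : EuclideanSpace ℝ (Fin d)) (g : ℝ → EuclideanSpace ℝ (Fin d)) (s : ℝ) :
    EuclideanSpace ℝ (Fin d) :=
  -((s / t₀) • (g t₀ + v₂)) - (s * (t₀ - s) / t₀ ^ 2) •
    mvE (Mᵀ * (NormedSpace.exp ((-s) • A))ᵀ)
      (mvE (gramian A M t₀)⁻¹ (v₁ + ctrlV A M t₀ v₂ g))

/-- `u(s) := α(s) + v⁽²⁾ + g(s)`. -/
noncomputable def ctrlU {m d : ℕ} (A : Matrix (Fin m) (Fin m) ℝ)
    (M : Matrix (Fin m) (Fin d) ℝ) (t₀ : ℝ) (v₁ : EuclideanSpace ℝ (Fin m))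
    (v₂ : EuclideanSpace ℝ (Fin d)) (g : ℝ → EuclideanSpace ℝ (Fin d)) (s : ℝ) :
    EuclideanSpace ℝ (Fin d) :=
  ctrlAlpha A M t₀ v₁ v₂ g s + v₂ + g s

/-- `z(t) := e^{tA} v⁽¹⁾ + ∫₀ᵗ e^{(t−s)A} M u(s) ds`. -/
noncomputable def ctrlZ {m d : ℕ} (A : Matrix (Fin m) (Fin m) ℝ)
    (M : Matrix (Fin m) (Fin d) ℝ) (t₀ : ℝ) (v₁ : EuclideanSpace ℝ (Fin m))
    (v₂ : EuclideanSpace ℝ (Fin d)) (g : ℝ → EuclideanSpace ℝ (Fin d)) (t : ℝ) :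
    EuclideanSpace ℝ (Fin m) :=
  mvE (NormedSpace.exp (t • A)) v₁ +
    ∫ s in (0:ℝ)..t, mvE (NormedSpace.exp ((t - s) • A) * M) (ctrlU A M t₀ v₁ v₂ g s)

namespace Stmt7Aux
open NormedSpace MeasureTheory

noncomputable def mvL {a b : ℕ} (N : Matrix (Fin a) (Fin b) ℝ) :
    EuclideanSpace ℝ (Fin b) →L[ℝ] EuclideanSpace ℝ (Fin a) :=
  LinearMap.toContinuousLinearMap (Matrix.toEuclideanLin N)

lemma mvE_eq {a b : ℕ} (N : Matrix (Fin a) (Fin b) ℝ) (v : EuclideanSpace ℝ (Fin b)) :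
    mvE N v = mvL N v := rfl

lemma mvE_mul {a b c : ℕ} (N : Matrix (Fin a) (Fin b) ℝ) (P : Matrix (Fin b) (Fin c) ℝ)
    (v : EuclideanSpace ℝ (Fin c)) : mvE (N * P) v = mvE N (mvE P v) := by
  simp [mvE, Matrix.mulVec_mulVec]

lemma mvE_one {a : ℕ} (v : EuclideanSpace ℝ (Fin a)) :
    mvE (1 : Matrix (Fin a) (Fin a) ℝ) v = v := by
  simp [mvE]

lemma mvE_apply {a b : ℕ} (N : Matrix (Fin a) (Fin b) ℝ) (v : EuclideanSpace ℝ (Fin b))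
    (i : Fin a) : mvE N v i = ∑ j, N i j * v j := by
  simp [mvE, Matrix.mulVec, dotProduct]

lemma cont_exp {n : ℕ} (A : Matrix (Fin n) (Fin n) ℝ) :
    Continuous fun s : ℝ => exp ((-s) • A) := by
  letI : SeminormedRing (Matrix (Fin n) (Fin n) ℝ) := Matrix.linftyOpSemiNormedRing
  letI : NormedRing (Matrix (Fin n) (Fin n) ℝ) := Matrix.linftyOpNormedRing
  letI : NormedAlgebra ℝ (Matrix (Fin n) (Fin n) ℝ) := Matrix.linftyOpNormedAlgebra
  letI : NormedAlgebra ℚ (Matrix (Fin n) (Fin n) ℝ) := Matrix.linftyOpNormedAlgebra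
  exact exp_continuous.comp (continuous_id.neg.smul continuous_const)

lemma exp_split {n : ℕ} (A : Matrix (Fin n) (Fin n) ℝ) (t s : ℝ) :
    exp ((t - s) • A) = exp (t • A) * exp ((-s) • A) := by
  rw [show (t - s) • A = t • A + (-s) • A by rw [← add_smul]; ring_nf]
  exact Matrix.exp_add_of_commute _ _ (((Commute.refl A).smul_left t).smul_right (-s))

set_option maxHeartbeats 1000000 in
lemma continuousOn_mvE {a b : ℕ} {S : Set ℝ} {N : ℝ → Matrix (Fin a) (Fin b) ℝ}
    {v : ℝ → EuclideanSpace ℝ (Fin b)} (hN : ContinuousOn N S) (hv : ContinuousOn v S) :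
    ContinuousOn (fun s => mvE (N s) (v s)) S := by
  have h : Continuous fun p : Matrix (Fin a) (Fin b) ℝ × EuclideanSpace ℝ (Fin b) =>
      mvE p.1 p.2 :=
    (PiLp.continuous_toLp _ _).comp
      (Continuous.matrix_mulVec continuous_fst ((PiLp.continuous_ofLp _ _).comp continuous_snd))
  exact h.comp_continuousOn (hN.prodMk hv)

lemma intervalIntegral_euclid_apply {n : ℕ} {f : ℝ → EuclideanSpace ℝ (Fin n)} {t₁ t₂ : ℝ}
    (hf : IntervalIntegrable f volume t₁ t₂) (i : Fin n) :
    (∫ s in t₁..t₂, f s) i = ∫ s in t₁..t₂, f s i :=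
  ((EuclideanSpace.proj i : EuclideanSpace ℝ (Fin n) →L[ℝ] ℝ).intervalIntegral_comp_comm hf).symm

lemma cont_P {m d : ℕ} (A : Matrix (Fin m) (Fin m) ℝ) (M : Matrix (Fin m) (Fin d) ℝ) :
    Continuous fun s : ℝ =>
      exp ((-s) • A) * M * Mᵀ * (exp ((-s) • A))ᵀ :=
  (((cont_exp A).matrix_mul continuous_const).matrix_mul continuous_const).matrix_mul
    (cont_exp A).matrix_transpose

lemma gramian_mvE {m d : ℕ} (A : Matrix (Fin m) (Fin m) ℝ) (M : Matrix (Fin m) (Fin d) ℝ)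
    (t₀ : ℝ) (w : EuclideanSpace ℝ (Fin m)) :
    mvE (gramian A M t₀) w = ∫ s in (0:ℝ)..t₀, (s * (t₀ - s) / t₀ ^ 2) •
      mvE (exp ((-s) • A) * M * Mᵀ * (exp ((-s) • A))ᵀ) w := by
  have hc : Continuous fun s : ℝ => s * (t₀ - s) / t₀ ^ 2 := by fun_prop
  have hP := cont_P A M
  have hI : IntervalIntegrable (fun s => (s * (t₀ - s) / t₀ ^ 2) •
      mvE (exp ((-s) • A) * M * Mᵀ * (exp ((-s) • A))ᵀ) w) volume 0 t₀ :=
    (hc.continuousOn.smul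
      (continuousOn_mvE hP.continuousOn continuousOn_const)).intervalIntegrable
  ext i
  rw [intervalIntegral_euclid_apply hI i, mvE_apply]
  have hQentry : ∀ j, gramian A M t₀ i j = ∫ s in (0:ℝ)..t₀, (s * (t₀ - s) / t₀ ^ 2) *
      (exp ((-s) • A) * M * Mᵀ * (exp ((-s) • A))ᵀ) i j := fun j => rfl
  calc ∑ j, gramian A M t₀ i j * w j
      = ∑ j, ∫ s in (0:ℝ)..t₀, (s * (t₀ - s) / t₀ ^ 2) *
          (exp ((-s) • A) * M * Mᵀ * (exp ((-s) • A))ᵀ) i j * w j := by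
        refine Finset.sum_congr rfl fun j _ => ?_
        rw [hQentry j, ← intervalIntegral.integral_mul_const]
    _ = ∫ s in (0:ℝ)..t₀, ∑ j, (s * (t₀ - s) / t₀ ^ 2) *
          (exp ((-s) • A) * M * Mᵀ * (exp ((-s) • A))ᵀ) i j * w j := by
        rw [intervalIntegral.integral_finset_sum]
        intro j _
        exact ((hc.mul (hP.matrix_elem i j)).mul continuous_const).intervalIntegrable _ _
    _ = ∫ s in (0:ℝ)..t₀, ((s * (t₀ - s) / t₀ ^ 2) •
          mvE (exp ((-s) • A) * M * Mᵀ * (exp ((-s) • A))ᵀ) w) i := by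
        refine intervalIntegral.integral_congr fun s _ => ?_
        simp [mvE_apply, Finset.mul_sum, mul_assoc]

end Stmt7Aux

open Stmt7Aux NormedSpace MeasureTheory in
set_option maxHeartbeats 1000000 in
/-- in the degenerate control setting, if the Gramian `Q_{t₀}` is
invertible then the first-component difference vanishes at the terminal time:
`z(t₀) = e^{t₀A} v⁽¹⁾ + ∫₀^{t₀} e^{(t₀−s)A} M u(s) ds = 0`. -/
theorem stmt_7 (m d : ℕ) (A : Matrix (Fin m) (Fin m) ℝ) (M : Matrix (Fin m) (Fin d) ℝ)
    (t₀ : ℝ) (ht₀ : 0 < t₀) (v₁ : EuclideanSpace ℝ (Fin m))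
    (v₂ : EuclideanSpace ℝ (Fin d)) (g : ℝ → EuclideanSpace ℝ (Fin d))
    (hg : ContinuousOn g (Set.Icc 0 t₀)) (hg0 : g 0 = 0)
    (hQ : IsUnit (gramian A M t₀)) :
    ctrlZ A M t₀ v₁ v₂ g t₀ = 0 := by
  have hne : t₀ ≠ 0 := ht₀.ne'
  have huIcc : Set.uIcc (0:ℝ) t₀ = Set.Icc 0 t₀ := Set.uIcc_of_le ht₀.le
  have hgu : ContinuousOn g (Set.uIcc (0:ℝ) t₀) := huIcc ▸ hg
  -- notation
  set w : EuclideanSpace ℝ (Fin m) :=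
    mvE (gramian A M t₀)⁻¹ (v₁ + ctrlV A M t₀ v₂ g) with hw
  -- pointwise decomposition of the control u
  have hu : ∀ s : ℝ, ctrlU A M t₀ v₁ v₂ g s =
      (((t₀ - s) / t₀) • v₂ - (s / t₀) • g t₀ + g s) -
        (s * (t₀ - s) / t₀ ^ 2) • mvE (Mᵀ * (exp ((-s) • A))ᵀ) w := by
    intro s
    have h1 : (t₀ - s) / t₀ = 1 - s / t₀ := by field_simp
    rw [ctrlU, ctrlAlpha, h1, ← hw]
    module
  -- key integrand identity
  have hkey : ∀ s : ℝ, mvE (exp ((-s) • A) * M) (ctrlU A M t₀ v₁ v₂ g s) =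
      mvE (exp ((-s) • A) * M) (((t₀ - s) / t₀) • v₂ - (s / t₀) • g t₀ + g s) -
        (s * (t₀ - s) / t₀ ^ 2) •
          mvE (exp ((-s) • A) * M * Mᵀ * (exp ((-s) • A))ᵀ) w := by
    intro s
    rw [hu s, mvE_eq, map_sub, _root_.map_smul, ← mvE_eq, ← mvE_eq, ← mvE_mul,
      ← Matrix.mul_assoc]
  -- integrability
  have hcM : Continuous fun s : ℝ => exp ((-s) • A) * M :=
    (cont_exp A).matrix_mul continuous_const
  have hb : ContinuousOn (fun s : ℝ => ((t₀ - s) / t₀) • v₂ - (s / t₀) • g t₀ + g s)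
      (Set.uIcc (0:ℝ) t₀) := by
    apply ContinuousOn.add ?_ hgu
    apply ContinuousOn.sub
    · exact (Continuous.continuousOn (f := fun s : ℝ => (t₀ - s) / t₀) (by fun_prop)).smul continuousOn_const
    · exact (Continuous.continuousOn (f := fun s : ℝ => s / t₀) (by fun_prop)).smul continuousOn_const
  have hint_b : IntervalIntegrable (fun s : ℝ =>
      mvE (exp ((-s) • A) * M) (((t₀ - s) / t₀) • v₂ - (s / t₀) • g t₀ + g s))
      volume 0 t₀ :=
    (continuousOn_mvE hcM.continuousOn hb).intervalIntegrable
  have hint_P : IntervalIntegrable (fun s : ℝ => (s * (t₀ - s) / t₀ ^ 2) •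
      mvE (exp ((-s) • A) * M * Mᵀ * (exp ((-s) • A))ᵀ) w) volume 0 t₀ :=
    ((Continuous.continuousOn (f := fun s : ℝ => s * (t₀ - s) / t₀ ^ 2) (by fun_prop)).smul
      (continuousOn_mvE (cont_P A M).continuousOn continuousOn_const)).intervalIntegrable
  have hint_u : IntervalIntegrable (fun s : ℝ =>
      mvE (exp ((-s) • A) * M) (ctrlU A M t₀ v₁ v₂ g s)) volume 0 t₀ := by
    rw [funext hkey]
    exact hint_b.sub hint_P
  -- the inner integral equals -v₁
  have h2 : (∫ s in (0:ℝ)..t₀, mvE (exp ((-s) • A) * M) (ctrlU A M t₀ v₁ v₂ g s)) =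
      ctrlV A M t₀ v₂ g - mvE (gramian A M t₀) w := by
    rw [funext hkey, intervalIntegral.integral_sub hint_b hint_P,
      ← gramian_mvE A M t₀ w]
    rfl
  have h3 : mvE (gramian A M t₀) w = v₁ + ctrlV A M t₀ v₂ g := by
    rw [hw, ← mvE_mul, Matrix.mul_nonsing_inv _ ((Matrix.isUnit_iff_isUnit_det _).mp hQ),
      mvE_one]
  -- assemble
  rw [ctrlZ]
  have h4 : (∫ s in (0:ℝ)..t₀, mvE (exp ((t₀ - s) • A) * M) (ctrlU A M t₀ v₁ v₂ g s)) =
      mvL (exp (t₀ • A)) (∫ s in (0:ℝ)..t₀,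
        mvE (exp ((-s) • A) * M) (ctrlU A M t₀ v₁ v₂ g s)) := by
    rw [← ContinuousLinearMap.intervalIntegral_comp_comm _ hint_u]
    refine intervalIntegral.integral_congr fun s _ => ?_
    rw [exp_split A t₀ s, Matrix.mul_assoc, mvE_mul, mvE_eq]
  rw [h4, h2, h3, mvE_eq, ← map_add]
  rw [show v₁ + (ctrlV A M t₀ v₂ g - (v₁ + ctrlV A M t₀ v₂ g)) = 0 by abel]
  exact map_zero _
end

section
/- Let A be an m×m real matrix, M an m×d real matrix, T > 0, 1 ≤ l ≤ m an integer, and c₀ > 0. Then there exists a constant c₁ > 0, depending only on A, M, T, l, c₀, such that for every t₀ ∈ (0,T], every v⁽¹⁾ ∈ ℝ^m, v⁽²⁾ ∈ ℝ^d, and every continuous g : [0,t₀] → ℝ^d with g(0) = 0, if the Gramian Q_{t₀} is invertible with ‖Q_{t₀}⁻¹‖ ≤ c₀ t₀^{1−2l}, then the control α of the degenerate control setting is differentiable on [0,t₀] and satisfies sup_{t∈[0,t₀]} ( t₀‖α′(t)‖ + ‖α(t)‖ ) ≤ (c₁ / t₀^{2(l−1)}) · ( t₀⁻¹‖v⁽¹⁾‖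 + ‖v⁽²⁾‖ + sup_{t∈[0,t₀]} ‖g(t)‖ ). -/
open Matrix

/- ### Auxiliary material -/

noncomputable def mvCLM {a b : ℕ} (N : Matrix (Fin a) (Fin b) ℝ) :
    EuclideanSpace ℝ (Fin b) →L[ℝ] EuclideanSpace ℝ (Fin a) :=
  LinearMap.toContinuousLinearMap
    { toFun := mvE N
      map_add' := fun x y => by simp [mvE, Matrix.mulVec_add]
      map_smul' := fun c x => by simp [mvE, Matrix.mulVec_smul] }

lemma mvCLM_apply {a b : ℕ} (N : Matrix (Fin a) (Fin b) ℝ) (v : EuclideanSpace ℝ (Fin b)) :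
    mvCLM N v = mvE N v := rfl

noncomputable def mvCLM₂ {a b : ℕ} :
    Matrix (Fin a) (Fin b) ℝ →ₗ[ℝ] (EuclideanSpace ℝ (Fin b) →L[ℝ] EuclideanSpace ℝ (Fin a)) where
  toFun := mvCLM
  map_add' N₁ N₂ := by
    ext v i
    show (mvE (N₁ + N₂) v) i = (mvE N₁ v + mvE N₂ v) i
    simp [mvE, Matrix.add_mulVec]
  map_smul' c N := by
    ext v i
    show (mvE (c • N) v) i = (c • mvE N v) i
    simp [mvE, Matrix.smul_mulVec]

lemma exists_mvE_bound {a b : ℕ} (T : ℝ) (F : ℝ → Matrix (Fin a) (Fin b) ℝ)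
    (hF : Continuous F) :
    ∃ C, 0 < C ∧ ∀ s ∈ Set.Icc (0:ℝ) T, ∀ x, ‖mvE (F s) x‖ ≤ C * ‖x‖ := by
  have hc : Continuous fun s => (mvCLM₂ : Matrix (Fin a) (Fin b) ℝ →ₗ[ℝ] _) (F s) :=
    (LinearMap.continuous_of_finiteDimensional _).comp hF
  obtain ⟨C, hC⟩ := isCompact_Icc.exists_bound_of_continuousOn hc.continuousOn
  refine ⟨max C 1, lt_of_lt_of_le one_pos (le_max_right _ _), fun s hs x => ?_⟩
  have h1 : ‖mvE (F s) x‖ ≤ ‖mvCLM (F s)‖ * ‖x‖ := by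
    rw [← mvCLM_apply]; exact (mvCLM (F s)).le_opNorm x
  exact h1.trans (mul_le_mul_of_nonneg_right ((hC s hs).trans (le_max_left _ _)) (norm_nonneg _))

lemma toEuclideanCLM_eq_mvE {n : ℕ} (N : Matrix (Fin n) (Fin n) ℝ) (x : EuclideanSpace ℝ (Fin n)) :
    Matrix.toEuclideanCLM (𝕜 := ℝ) N x = mvE N x := by
  rw [show x = (WithLp.equiv 2 _).symm ((WithLp.equiv 2 _) x) from rfl]
  rfl

noncomputable def psiL {m d : ℕ} (M : Matrix (Fin m) (Fin d) ℝ)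
    (w : EuclideanSpace ℝ (Fin m)) :
    Matrix (Fin m) (Fin m) ℝ →ₗ[ℝ] EuclideanSpace ℝ (Fin d) where
  toFun N := mvE (Mᵀ * Nᵀ) w
  map_add' N₁ N₂ := by
    ext i
    show (mvE (Mᵀ * (N₁ + N₂)ᵀ) w) i = (mvE (Mᵀ * N₁ᵀ) w + mvE (Mᵀ * N₂ᵀ) w) i
    simp [mvE, Matrix.transpose_add, Matrix.mul_add, Matrix.add_mulVec]
  map_smul' c N := by
    ext i
    show (mvE (Mᵀ * (c • N)ᵀ) w) i = (c • mvE (Mᵀ * Nᵀ) w) i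
    simp [mvE, Matrix.transpose_smul, Matrix.mul_smul, Matrix.smul_mulVec]

section ExpAux

attribute [local instance] Matrix.linftyOpNormedAddCommGroup Matrix.linftyOpNormedRing
  Matrix.linftyOpNormedAlgebra

lemma hasDerivAt_expNeg (n : ℕ) (A : Matrix (Fin n) (Fin n) ℝ) (s : ℝ) :
    HasDerivAt (fun s : ℝ => NormedSpace.exp ((-s) • A))
      (NormedSpace.exp ((-s) • A) * (-A)) s := by
  have h1 := hasDerivAt_exp_smul_const A (-s)
  have h2 : HasDerivAt (fun s : ℝ => -s) (-1 : ℝ) s := (hasDerivAt_id s).neg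
  have h3 := h1.scomp s h2
  have e2 : (-1 : ℝ) • (NormedSpace.exp ((-s) • A) * A) =
      NormedSpace.exp ((-s) • A) * (-A) := by
    rw [neg_smul, one_smul, mul_neg]
  exact h3.congr_deriv e2

lemma continuous_expNeg (n : ℕ) (A : Matrix (Fin n) (Fin n) ℝ) :
    Continuous (fun s : ℝ => NormedSpace.exp ((-s) • A)) :=
  NormedSpace.exp_continuous.comp (continuous_neg.smul continuous_const)

lemma hasDerivAt_psi_exp {m d : ℕ} (A : Matrix (Fin m) (Fin m) ℝ)
    (M : Matrix (Fin m) (Fin d) ℝ) (w : EuclideanSpace ℝ (Fin m)) (s : ℝ) :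
    HasDerivAt (fun s : ℝ => mvE (Mᵀ * (NormedSpace.exp ((-s) • A))ᵀ) w)
      (mvE (Mᵀ * (NormedSpace.exp ((-s) • A) * (-A))ᵀ) w) s := by
  have hE := hasDerivAt_expNeg m A s
  exact (LinearMap.toContinuousLinearMap (psiL M w)).hasFDerivAt.comp_hasDerivAt s hE

end ExpAux

set_option maxHeartbeats 2000000 in
/-- there is a constant `c₁ > 0` depending only on `A, M, T, l, c₀` such
that, for all `t₀ ∈ (0,T]`, all `v⁽¹⁾, v⁽²⁾`, and all continuous `g` on `[0,t₀]` with
`g(0) = 0`, if `Q_{t₀}` is invertible with `‖Q_{t₀}⁻¹‖ ≤ c₀ t₀^{1−2l}` then the control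
`α` is differentiable on `[0,t₀]` with
`sup_{t∈[0,t₀]} ( t₀‖α′(t)‖ + ‖α(t)‖ ) ≤ (c₁/t₀^{2(l−1)}) ( t₀⁻¹‖v⁽¹⁾‖ + ‖v⁽²⁾‖ + sup_{t∈[0,t₀]}‖g(t)‖ )`. -/
theorem stmt_8 (m d : ℕ) (A : Matrix (Fin m) (Fin m) ℝ) (M : Matrix (Fin m) (Fin d) ℝ)
    (T : ℝ) (hT : 0 < T) (l : ℕ) (hl1 : 1 ≤ l) (hlm : l ≤ m)
    (c₀ : ℝ) (hc₀ : 0 < c₀) :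
    ∃ c₁ : ℝ, 0 < c₁ ∧ ∀ t₀ ∈ Set.Ioc (0 : ℝ) T,
      ∀ (v₁ : EuclideanSpace ℝ (Fin m)) (v₂ : EuclideanSpace ℝ (Fin d))
        (g : ℝ → EuclideanSpace ℝ (Fin d)),
        ContinuousOn g (Set.Icc 0 t₀) → g 0 = 0 →
        IsUnit (gramian A M t₀) →
        ‖Matrix.toEuclideanCLM (𝕜 := ℝ) ((gramian A M t₀)⁻¹)‖
            ≤ c₀ * t₀ ^ ((1 : ℤ) - 2 * (l : ℤ)) →
        ∃ α' : ℝ → EuclideanSpace ℝ (Fin d),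
          (∀ t ∈ Set.Icc (0 : ℝ) t₀,
            HasDerivWithinAt (ctrlAlpha A M t₀ v₁ v₂ g) (α' t) (Set.Icc 0 t₀) t) ∧
          ∀ t ∈ Set.Icc (0 : ℝ) t₀,
            t₀ * ‖α' t‖ + ‖ctrlAlpha A M t₀ v₁ v₂ g t‖
              ≤ (c₁ / t₀ ^ (2 * (l - 1))) *
                (t₀⁻¹ * ‖v₁‖ + ‖v₂‖ + sSup ((fun s => ‖g s‖) '' Set.Icc 0 t₀)) := by
  classical
  obtain ⟨CE, hCE0, hCE⟩ := exists_mvE_bound T (fun s => NormedSpace.exp ((-s) • A) * M)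
    ((continuous_expNeg m A).matrix_mul continuous_const)
  obtain ⟨CM, hCM0, hCM⟩ := exists_mvE_bound T (fun s => Mᵀ * (NormedSpace.exp ((-s) • A))ᵀ)
    (continuous_const.matrix_mul (continuous_expNeg m A).matrix_transpose)
  obtain ⟨CA, hCA0, hCA⟩ := exists_mvE_bound T
    (fun s => Mᵀ * (NormedSpace.exp ((-s) • A) * (-A))ᵀ)
    (continuous_const.matrix_mul
      (((continuous_expNeg m A).matrix_mul continuous_const).matrix_transpose))
  set p := 2 * (l - 1) with hp
  refine ⟨2 * T ^ p + c₀ * (2 * CM + T * CA) * (1 + 2 * CE), by positivity, ?_⟩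
  rintro t₀ ⟨ht0, htT⟩ v₁ v₂ g hg hg0 hQ hQn
  set w := mvE (gramian A M t₀)⁻¹ (v₁ + ctrlV A M t₀ v₂ g) with hw
  set S := sSup ((fun s => ‖g s‖) '' Set.Icc 0 t₀) with hS
  clear_value w S
  have hbdd : BddAbove ((fun s => ‖g s‖) '' Set.Icc 0 t₀) :=
    (isCompact_Icc.image_of_continuousOn hg.norm).bddAbove
  have hgS : ∀ r ∈ Set.Icc (0:ℝ) t₀, ‖g r‖ ≤ S := by
    rw [hS]; exact fun r hr => le_csSup hbdd ⟨r, hr, rfl⟩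
  have hS0 : 0 ≤ S := le_trans (norm_nonneg (g 0)) (hgS 0 ⟨le_refl 0, ht0.le⟩)
  -- bound on V
  have hVb : ‖ctrlV A M t₀ v₂ g‖ ≤ CE * (‖v₂‖ + 2 * S) * t₀ := by
    have hb : ∀ r ∈ Set.uIoc (0:ℝ) t₀,
        ‖mvE (NormedSpace.exp ((-r) • A) * M)
          (((t₀ - r) / t₀) • v₂ - (r / t₀) • g t₀ + g r)‖ ≤ CE * (‖v₂‖ + 2 * S) := by
      intro r hr
      rw [Set.uIoc_of_le ht0.le] at hr
      have hr1 : r ∈ Set.Icc (0:ℝ) T := ⟨hr.1.le, hr.2.trans htT⟩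
      refine (hCE r hr1 _).trans ?_
      have hnv : ‖((t₀ - r) / t₀) • v₂ - (r / t₀) • g t₀ + g r‖ ≤ ‖v₂‖ + 2 * S := by
        have h1 : ‖((t₀ - r) / t₀) • v₂ - (r / t₀) • g t₀ + g r‖
            ≤ ‖((t₀ - r) / t₀) • v₂‖ + ‖(r / t₀) • g t₀‖ + ‖g r‖ :=
          le_trans (norm_add_le _ _) (by gcongr; exact norm_sub_le _ _)
        have h2 : |(t₀ - r) / t₀| ≤ 1 := by
          rw [abs_div, abs_of_pos ht0, div_le_one ht0, abs_le]
          constructor <;> nlinarith [hr.1, hr.2]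
        have h3 : |r / t₀| ≤ 1 := by
          rw [abs_div, abs_of_pos ht0, div_le_one ht0, abs_le]
          constructor <;> nlinarith [hr.1, hr.2]
        have h4 : ‖g t₀‖ ≤ S := hgS t₀ ⟨ht0.le, le_refl _⟩
        have h5 : ‖g r‖ ≤ S := hgS r ⟨hr.1.le, hr.2⟩
        rw [norm_smul, norm_smul, Real.norm_eq_abs, Real.norm_eq_abs] at h1
        nlinarith [norm_nonneg v₂, norm_nonneg (g t₀), abs_nonneg ((t₀ - r) / t₀),
          abs_nonneg (r / t₀)]
      exact mul_le_mul_of_nonneg_left hnv hCE0.le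
    have := intervalIntegral.norm_integral_le_of_norm_le_const hb
    rw [sub_zero, abs_of_pos ht0] at this
    exact this
  -- bound on w
  have hwb : ‖w‖ ≤ c₀ * t₀ ^ ((1 : ℤ) - 2 * (l : ℤ)) * (‖v₁‖ + CE * (‖v₂‖ + 2 * S) * t₀) := by
    have h1 : ‖w‖ ≤ ‖Matrix.toEuclideanCLM (𝕜 := ℝ) ((gramian A M t₀)⁻¹)‖ *
        ‖v₁ + ctrlV A M t₀ v₂ g‖ := by
      rw [hw, ← toEuclideanCLM_eq_mvE]
      exact ContinuousLinearMap.le_opNorm _ _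
    have h2 : ‖v₁ + ctrlV A M t₀ v₂ g‖ ≤ ‖v₁‖ + CE * (‖v₂‖ + 2 * S) * t₀ :=
      (norm_add_le _ _).trans (by linarith)
    calc ‖w‖ ≤ ‖Matrix.toEuclideanCLM (𝕜 := ℝ) ((gramian A M t₀)⁻¹)‖ *
        ‖v₁ + ctrlV A M t₀ v₂ g‖ := h1
      _ ≤ (c₀ * t₀ ^ ((1 : ℤ) - 2 * (l : ℤ))) * (‖v₁‖ + CE * (‖v₂‖ + 2 * S) * t₀) := by
          apply mul_le_mul hQn h2 (norm_nonneg _)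
          positivity
  -- zpow rewriting
  have hpz : ((2 * (l - 1) : ℕ) : ℤ) = 2 * (l : ℤ) - 2 := by
    push_cast [Nat.cast_sub hl1]; ring
  have hexp : ((1 : ℤ) - 2 * (l : ℤ)) = -((p : ℤ) + 1) := by
    rw [hp]; omega
  have hzeq : t₀ ^ ((1 : ℤ) - 2 * (l : ℤ)) = (t₀ ^ (p + 1))⁻¹ := by
    rw [hexp, _root_.zpow_neg]
    have : ((p:ℤ) + 1) = ((p + 1 : ℕ) : ℤ) := by push_cast; ring
    rw [this, zpow_natCast]
  set X := t₀⁻¹ * ‖v₁‖ + ‖v₂‖ + S with hX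
  clear_value X
  have hX0 : 0 ≤ X := by
    rw [hX]
    have h1 : 0 ≤ t₀⁻¹ * ‖v₁‖ := by positivity
    have h2 := norm_nonneg v₂
    linarith
  have hWX : ‖w‖ ≤ c₀ * (1 + 2 * CE) * X / t₀ ^ p := by
    refine hwb.trans ?_
    rw [hzeq]
    have e : c₀ * (t₀ ^ (p + 1))⁻¹ * (‖v₁‖ + CE * (‖v₂‖ + 2 * S) * t₀)
        = c₀ * (‖v₁‖ + CE * (‖v₂‖ + 2 * S) * t₀) / (t₀ ^ p * t₀) := by
      rw [pow_succ]; ring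
    rw [e, div_le_div_iff₀ (by positivity) (by positivity)]
    have hXt : X * t₀ = ‖v₁‖ + (‖v₂‖ + S) * t₀ := by
      rw [hX]; field_simp; ring
    have key : c₀ * (‖v₁‖ + CE * (‖v₂‖ + 2 * S) * t₀)
        ≤ c₀ * (1 + 2 * CE) * (‖v₁‖ + (‖v₂‖ + S) * t₀) := by
      nlinarith [mul_nonneg (mul_nonneg hc₀.le hCE0.le) (norm_nonneg v₁),
        mul_nonneg (mul_nonneg hc₀.le (norm_nonneg v₂)) ht0.le,
        mul_nonneg (mul_nonneg hc₀.le hS0) ht0.le,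
        mul_nonneg (mul_nonneg (mul_nonneg hc₀.le hCE0.le) (norm_nonneg v₂)) ht0.le]
    calc c₀ * (‖v₁‖ + CE * (‖v₂‖ + 2 * S) * t₀) * t₀ ^ p
        ≤ c₀ * (1 + 2 * CE) * (‖v₁‖ + (‖v₂‖ + S) * t₀) * t₀ ^ p := by
          exact mul_le_mul_of_nonneg_right key (by positivity)
      _ = c₀ * (1 + 2 * CE) * X * (t₀ ^ p * t₀) := by rw [← hXt]; ring
  -- the derivative
  refine ⟨fun t => -((1 / t₀) • (g t₀ + v₂)) -
      ((t * (t₀ - t) / t₀ ^ 2) • mvE (Mᵀ * (NormedSpace.exp ((-t) • A) * (-A))ᵀ) w +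
       ((t₀ - 2 * t) / t₀ ^ 2) • mvE (Mᵀ * (NormedSpace.exp ((-t) • A))ᵀ) w), ?_, ?_⟩
  · intro t ht
    have hlin : HasDerivAt (fun s : ℝ => -((s / t₀) • (g t₀ + v₂)))
        (-((1 / t₀) • (g t₀ + v₂))) t :=
      (((hasDerivAt_id t).div_const t₀).smul_const (g t₀ + v₂)).neg
    have hq : HasDerivAt (fun s : ℝ => s * (t₀ - s) / t₀ ^ 2) ((t₀ - 2 * t) / t₀ ^ 2) t := by
      have h := ((hasDerivAt_id t).mul
        ((hasDerivAt_const t t₀).sub (hasDerivAt_id t))).div_const (t₀ ^ 2)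
      refine h.congr_deriv ?_
      simp only [Pi.sub_apply, id]; ring
    have hh := hasDerivAt_psi_exp A M w t
    have hmain := hq.smul hh
    have hfun : ctrlAlpha A M t₀ v₁ v₂ g = fun s : ℝ =>
        -((s / t₀) • (g t₀ + v₂)) - (s * (t₀ - s) / t₀ ^ 2) •
          mvE (Mᵀ * (NormedSpace.exp ((-s) • A))ᵀ) w := by
      funext s
      simp only [ctrlAlpha, hw]
    rw [hfun]
    exact ((hlin.sub hmain).hasDerivWithinAt)
  · intro t ht
    obtain ⟨ht1, ht2⟩ := ht
    have htT' : t ∈ Set.Icc (0:ℝ) T := ⟨ht1, ht2.trans htT⟩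
    have hcb : ‖g t₀ + v₂‖ ≤ S + ‖v₂‖ :=
      (norm_add_le _ _).trans (add_le_add_left (hgS t₀ ⟨ht0.le, le_refl _⟩) _)
    have habsq : |t * (t₀ - t) / t₀ ^ 2| ≤ 1 / 4 := by
      rw [abs_div, abs_of_pos (by positivity : (0:ℝ) < t₀ ^ 2), div_le_iff₀ (by positivity)]
      rw [abs_of_nonneg (by nlinarith)]
      nlinarith [sq_nonneg (t₀ - 2 * t)]
    have habsl : |(t₀ - 2 * t) / t₀ ^ 2| ≤ 1 / t₀ := by
      have e : (1:ℝ) / t₀ * t₀ ^ 2 = t₀ := by field_simp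
      rw [abs_div, abs_of_pos (by positivity : (0:ℝ) < t₀ ^ 2), div_le_iff₀ (by positivity), e,
        abs_le]
      constructor <;> linarith
    have habst : |t / t₀| ≤ 1 := by
      rw [abs_div, abs_of_pos ht0, div_le_one ht0, abs_le]
      constructor <;> nlinarith
    have hCMt : ‖mvE (Mᵀ * (NormedSpace.exp ((-t) • A))ᵀ) w‖ ≤ CM * ‖w‖ := hCM t htT' w
    have hCAt : ‖mvE (Mᵀ * (NormedSpace.exp ((-t) • A) * (-A))ᵀ) w‖ ≤ CA * ‖w‖ := hCA t htT' w
    -- bound on α t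
    have hαt : ‖ctrlAlpha A M t₀ v₁ v₂ g t‖ ≤ (S + ‖v₂‖) + (1 / 4) * (CM * ‖w‖) := by
      simp only [ctrlAlpha, ← hw]
      refine (norm_sub_le _ _).trans ?_
      rw [norm_neg, norm_smul, norm_smul, Real.norm_eq_abs, Real.norm_eq_abs]
      have b1 : |t / t₀| * ‖g t₀ + v₂‖ ≤ 1 * (S + ‖v₂‖) :=
        mul_le_mul habst hcb (norm_nonneg _) one_pos.le
      have b2 : |t * (t₀ - t) / t₀ ^ 2| * ‖mvE (Mᵀ * (NormedSpace.exp ((-t) • A))ᵀ) w‖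
          ≤ (1 / 4) * (CM * ‖w‖) :=
        mul_le_mul habsq hCMt (norm_nonneg _) (by norm_num)
      linarith
    -- bound on α' t
    have hα't : ‖(-((1 / t₀) • (g t₀ + v₂)) -
        ((t * (t₀ - t) / t₀ ^ 2) • mvE (Mᵀ * (NormedSpace.exp ((-t) • A) * (-A))ᵀ) w +
         ((t₀ - 2 * t) / t₀ ^ 2) • mvE (Mᵀ * (NormedSpace.exp ((-t) • A))ᵀ) w))‖
        ≤ (1 / t₀) * (S + ‖v₂‖) + ((1 / 4) * (CA * ‖w‖) + (1 / t₀) * (CM * ‖w‖)) := by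
      refine (norm_sub_le _ _).trans ?_
      rw [norm_neg, norm_smul]
      have hb : ‖(t * (t₀ - t) / t₀ ^ 2) • mvE (Mᵀ * (NormedSpace.exp ((-t) • A) * (-A))ᵀ) w +
          ((t₀ - 2 * t) / t₀ ^ 2) • mvE (Mᵀ * (NormedSpace.exp ((-t) • A))ᵀ) w‖
          ≤ (1 / 4) * (CA * ‖w‖) + (1 / t₀) * (CM * ‖w‖) := by
        refine (norm_add_le _ _).trans ?_
        rw [norm_smul, norm_smul, Real.norm_eq_abs, Real.norm_eq_abs]
        have b2 : |t * (t₀ - t) / t₀ ^ 2| *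
            ‖mvE (Mᵀ * (NormedSpace.exp ((-t) • A) * (-A))ᵀ) w‖ ≤ (1 / 4) * (CA * ‖w‖) :=
          mul_le_mul habsq hCAt (norm_nonneg _) (by norm_num)
        have b3 : |(t₀ - 2 * t) / t₀ ^ 2| *
            ‖mvE (Mᵀ * (NormedSpace.exp ((-t) • A))ᵀ) w‖ ≤ (1 / t₀) * (CM * ‖w‖) :=
          mul_le_mul habsl hCMt (norm_nonneg _) (by positivity)
        linarith
      have hlinn : ‖(1 / t₀ : ℝ)‖ * ‖g t₀ + v₂‖ ≤ (1 / t₀) * (S + ‖v₂‖) := by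
        rw [Real.norm_eq_abs, abs_of_pos (by positivity : (0:ℝ) < 1 / t₀)]
        exact mul_le_mul_of_nonneg_left hcb (by positivity)
      linarith
    -- multiply α' bound by t₀
    have hα't₀ : t₀ * ‖(-((1 / t₀) • (g t₀ + v₂)) -
        ((t * (t₀ - t) / t₀ ^ 2) • mvE (Mᵀ * (NormedSpace.exp ((-t) • A) * (-A))ᵀ) w +
         ((t₀ - 2 * t) / t₀ ^ 2) • mvE (Mᵀ * (NormedSpace.exp ((-t) • A))ᵀ) w))‖
        ≤ (S + ‖v₂‖) + ((T / 4) * (CA * ‖w‖) + CM * ‖w‖) := by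
      have h := mul_le_mul_of_nonneg_left hα't ht0.le
      have e : t₀ * ((1 / t₀) * (S + ‖v₂‖) + ((1 / 4) * (CA * ‖w‖) + (1 / t₀) * (CM * ‖w‖)))
          = (S + ‖v₂‖) + ((t₀ / 4) * (CA * ‖w‖) + CM * ‖w‖) := by
        field_simp
      rw [e] at h
      refine h.trans ?_
      have : (t₀ / 4) * (CA * ‖w‖) ≤ (T / 4) * (CA * ‖w‖) := by
        apply mul_le_mul_of_nonneg_right _ (by positivity)
        linarith
      linarith
    -- final estimate
    have hsum : t₀ * ‖(-((1 / t₀) • (g t₀ + v₂)) -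
        ((t * (t₀ - t) / t₀ ^ 2) • mvE (Mᵀ * (NormedSpace.exp ((-t) • A) * (-A))ᵀ) w +
         ((t₀ - 2 * t) / t₀ ^ 2) • mvE (Mᵀ * (NormedSpace.exp ((-t) • A))ᵀ) w))‖ +
        ‖ctrlAlpha A M t₀ v₁ v₂ g t‖
        ≤ 2 * (S + ‖v₂‖) + (2 * CM + T * CA) * ‖w‖ := by
      have h1 : (1 / 4) * (CM * ‖w‖) + CM * ‖w‖ ≤ 2 * (CM * ‖w‖) := by
        nlinarith [mul_nonneg hCM0.le (norm_nonneg w)]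
      have h2 : (T / 4) * (CA * ‖w‖) ≤ T * (CA * ‖w‖) := by
        nlinarith [mul_nonneg (mul_nonneg hT.le hCA0.le) (norm_nonneg w)]
      nlinarith [hαt, hα't₀]
    refine hsum.trans ?_
    -- 2*(S+N2) ≤ 2*T^p*X/t₀^p
    have hp1 : 2 * (S + ‖v₂‖) ≤ 2 * T ^ p * X / t₀ ^ p := by
      rw [le_div_iff₀ (by positivity : (0:ℝ) < t₀ ^ p)]
      have h1 : S + ‖v₂‖ ≤ X := by
        have : 0 ≤ t₀⁻¹ * ‖v₁‖ := by positivity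
        rw [hX]; linarith
      have h2 : t₀ ^ p ≤ T ^ p := pow_le_pow_left₀ ht0.le htT p
      nlinarith [pow_pos ht0 p, norm_nonneg v₂]
    have hp2 : (2 * CM + T * CA) * ‖w‖
        ≤ (2 * CM + T * CA) * (c₀ * (1 + 2 * CE) * X / t₀ ^ p) :=
      mul_le_mul_of_nonneg_left hWX (by positivity)
    have hfin : 2 * T ^ p * X / t₀ ^ p +
        (2 * CM + T * CA) * (c₀ * (1 + 2 * CE) * X / t₀ ^ p)
        = ((2 * T ^ p + c₀ * (2 * CM + T * CA) * (1 + 2 * CE)) / t₀ ^ p) * X := by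
      ring
    linarith [hp1, hp2, hfin.le, hfin.ge]
end

section
/- Let A be an m×m real matrix, M an m×d real matrix, T > 0, 1 ≤ l ≤ m an integer, and c₀ > 0. Then there exists a constant c₂ > 0, depending only on A, M, T, l, c₀, such that for every t₀ ∈ (0,T], every v⁽¹⁾ ∈ ℝ^m, v⁽²⁾ ∈ ℝ^d, and every continuous g : [0,t₀] → ℝ^d with g(0) = 0, if the Gramian Q_{t₀} is invertible with ‖Q_{t₀}⁻¹‖ ≤ c₀ t₀^{1−2l}, then the trajectory (z, u) of the degenerate control setting satisfies sup_{t∈[0,t₀]} ( ‖z(t)‖² + ‖u(t)‖² ) ≤ (c₂ / t₀^{4(l−1)}) · ( t₀⁻²‖v⁽¹⁾‖² + ‖v⁽²⁾‖² + sup_{t∈[0,t₀]} ‖g(t)‖² ). -/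
open Matrix

/-- The Euclidean operator norm of a (rectangular) matrix. -/
noncomputable def opN {a b : ℕ} (N : Matrix (Fin a) (Fin b) ℝ) : ℝ :=
  ‖LinearMap.toContinuousLinearMap (Matrix.toEuclideanLin N)‖

lemma mvE_eq {a b : ℕ} (N : Matrix (Fin a) (Fin b) ℝ) (v : EuclideanSpace ℝ (Fin b)) :
    mvE N v = LinearMap.toContinuousLinearMap (Matrix.toEuclideanLin N) v := by
  simp [mvE, Matrix.toEuclideanLin_apply]

lemma opN_nonneg {a b : ℕ} (N : Matrix (Fin a) (Fin b) ℝ) : 0 ≤ opN N := norm_nonneg _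

lemma norm_mvE_le {a b : ℕ} (N : Matrix (Fin a) (Fin b) ℝ) (v : EuclideanSpace ℝ (Fin b)) :
    ‖mvE N v‖ ≤ opN N * ‖v‖ := by
  rw [mvE_eq]; exact ContinuousLinearMap.le_opNorm _ _

lemma mvE_mul {a b c : ℕ} (N : Matrix (Fin a) (Fin b) ℝ) (P : Matrix (Fin b) (Fin c) ℝ)
    (v : EuclideanSpace ℝ (Fin c)) : mvE (N * P) v = mvE N (mvE P v) := by
  simp [mvE, Matrix.mulVec_mulVec]

lemma norm_mvE_mul_le {a b c : ℕ} (N : Matrix (Fin a) (Fin b) ℝ) (P : Matrix (Fin b) (Fin c) ℝ)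
    (v : EuclideanSpace ℝ (Fin c)) : ‖mvE (N * P) v‖ ≤ opN N * (opN P * ‖v‖) := by
  rw [mvE_mul]
  exact (norm_mvE_le _ _).trans
    (mul_le_mul_of_nonneg_left (norm_mvE_le P v) (opN_nonneg N))

lemma mvE_clm {a : ℕ} (N : Matrix (Fin a) (Fin a) ℝ) (v : EuclideanSpace ℝ (Fin a)) :
    mvE N v = Matrix.toEuclideanCLM (𝕜 := ℝ) N v := by
  rfl

lemma norm_mvE_clm_le {a : ℕ} (N : Matrix (Fin a) (Fin a) ℝ) (v : EuclideanSpace ℝ (Fin a)) :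
    ‖mvE N v‖ ≤ ‖Matrix.toEuclideanCLM (𝕜 := ℝ) N‖ * ‖v‖ := by
  rw [mvE_clm]; exact ContinuousLinearMap.le_opNorm _ _

lemma opN_continuous {a b : ℕ} : Continuous (opN (a := a) (b := b)) := by
  have h : Continuous fun N : Matrix (Fin a) (Fin b) ℝ =>
      LinearMap.toContinuousLinearMap (Matrix.toEuclideanLin N) := by
    exact LinearMap.continuous_of_finiteDimensional
      ((LinearMap.toContinuousLinearMap :
        (EuclideanSpace ℝ (Fin b) →ₗ[ℝ] EuclideanSpace ℝ (Fin a)) ≃ₗ[ℝ] _).toLinearMap.comp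
        (Matrix.toEuclideanLin (𝕜 := ℝ)).toLinearMap)
  exact h.norm

lemma three_sq (a b c : ℝ) : (a+b+c)^2 ≤ 3*(a^2+b^2+c^2) := by
  nlinarith [sq_nonneg (a-b), sq_nonneg (a-c), sq_nonneg (b-c)]

lemma exists_expBound (k : ℕ) (B : Matrix (Fin k) (Fin k) ℝ) (T : ℝ) (hT : 0 < T) :
    ∃ C : ℝ, 0 < C ∧ ∀ s ∈ Set.Icc (-T) T, opN (NormedSpace.exp (s • B)) ≤ C := by
  have hexp : Continuous fun s : ℝ => NormedSpace.exp (s • B) := by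
    letI : SeminormedRing (Matrix (Fin k) (Fin k) ℝ) := Matrix.linftyOpSemiNormedRing
    letI : NormedRing (Matrix (Fin k) (Fin k) ℝ) := Matrix.linftyOpNormedRing
    letI : NormedAlgebra ℝ (Matrix (Fin k) (Fin k) ℝ) := Matrix.linftyOpNormedAlgebra
    exact (continuous_iff_continuousAt.2 fun x => (NormedSpace.exp_analytic (𝕂 := ℝ) x).continuousAt).comp
      (continuous_id.smul continuous_const)
  have hc : Continuous fun s : ℝ => opN (NormedSpace.exp (s • B)) :=
    opN_continuous.comp hexp
  obtain ⟨s₀, _, hmax⟩ := (isCompact_Icc (a := -T) (b := T)).exists_isMaxOn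
    ⟨0, Set.mem_Icc.mpr ⟨by linarith, hT.le⟩⟩ hc.continuousOn
  refine ⟨opN (NormedSpace.exp (s₀ • B)) + 1,
    by linarith [opN_nonneg (NormedSpace.exp (s₀ • B))], fun s hs => ?_⟩
  have := isMaxOn_iff.mp hmax s hs
  linarith

set_option maxHeartbeats 1000000 in
/-- there is a constant `c₂ > 0` depending only on `A, M, T, l, c₀` such
that, for all `t₀ ∈ (0,T]`, all `v⁽¹⁾, v⁽²⁾`, and all continuous `g` on `[0,t₀]` with
`g(0) = 0`, if `Q_{t₀}` is invertible with `‖Q_{t₀}⁻¹‖ ≤ c₀ t₀^{1−2l}` then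
`sup_{t∈[0,t₀]} ( ‖z(t)‖² + ‖u(t)‖² ) ≤ (c₂/t₀^{4(l−1)}) ( t₀⁻²‖v⁽¹⁾‖² + ‖v⁽²⁾‖² + sup_{t∈[0,t₀]}‖g(t)‖² )`. -/
theorem stmt_9 (m d : ℕ) (A : Matrix (Fin m) (Fin m) ℝ) (M : Matrix (Fin m) (Fin d) ℝ)
    (T : ℝ) (hT : 0 < T) (l : ℕ) (hl1 : 1 ≤ l) (hlm : l ≤ m)
    (c₀ : ℝ) (hc₀ : 0 < c₀) :
    ∃ c₂ : ℝ, 0 < c₂ ∧ ∀ t₀ ∈ Set.Ioc (0 : ℝ) T,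
      ∀ (v₁ : EuclideanSpace ℝ (Fin m)) (v₂ : EuclideanSpace ℝ (Fin d))
        (g : ℝ → EuclideanSpace ℝ (Fin d)),
        ContinuousOn g (Set.Icc 0 t₀) → g 0 = 0 →
        IsUnit (gramian A M t₀) →
        ‖Matrix.toEuclideanCLM (𝕜 := ℝ) ((gramian A M t₀)⁻¹)‖
            ≤ c₀ * t₀ ^ ((1 : ℤ) - 2 * (l : ℤ)) →
        ∀ t ∈ Set.Icc (0 : ℝ) t₀,
          ‖ctrlZ A M t₀ v₁ v₂ g t‖ ^ 2 + ‖ctrlU A M t₀ v₁ v₂ g t‖ ^ 2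
            ≤ (c₂ / t₀ ^ (4 * (l - 1))) *
              (t₀⁻¹ ^ 2 * ‖v₁‖ ^ 2 + ‖v₂‖ ^ 2 +
                sSup ((fun s => ‖g s‖ ^ 2) '' Set.Icc 0 t₀)) := by
  obtain ⟨CA, hCA0, hCA⟩ := exists_expBound m A T hT
  obtain ⟨CB, hCB0, hCB⟩ := exists_expBound m Aᵀ T hT
  have hCMnn : 0 ≤ opN M := opN_nonneg _
  have hCMTnn : 0 ≤ opN Mᵀ := opN_nonneg _
  set CM := opN M with hCMdef
  set CMT := opN Mᵀ with hCMTdef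
  have hcnn : 0 ≤ CMT*CB*c₀ := mul_nonneg (mul_nonneg hCMTnn hCB0.le) hc₀.le
  have hTnn : 0 ≤ T^(2*l-2) := pow_nonneg hT.le _
  set Ku : ℝ := CMT*CB*c₀ + 2*(CMT*CB*c₀)*(CA*CM) + 2*T^(2*l-2) + 1 with hKu
  have hKupos : 0 < Ku := by
    have h2 : 0 ≤ 2*(CMT*CB*c₀)*(CA*CM) :=
      mul_nonneg (by linarith) (mul_nonneg hCA0.le hCMnn)
    rw [hKu]; linarith
  set Kz : ℝ := CA*T*T^(2*l-2) + CA*CM*Ku*T with hKz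
  have hKznn : 0 ≤ Kz := by
    rw [hKz]
    have := mul_nonneg (mul_nonneg (mul_nonneg hCA0.le hCMnn) hKupos.le) hT.le
    have := mul_nonneg (mul_nonneg hCA0.le hT.le) hTnn
    linarith
  clear_value Ku Kz
  refine ⟨3*(Kz^2+Ku^2)+1, by positivity, ?_⟩
  rintro t₀ ⟨ht0, htT⟩ v₁ v₂ g hg hg0 hQu hQn t ht
  -- maximum of ‖g‖ on [0, t₀]
  obtain ⟨s₀, hs₀, hmax⟩ := (isCompact_Icc (a := (0:ℝ)) (b := t₀)).exists_isMaxOn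
    ⟨0, Set.mem_Icc.mpr ⟨le_refl _, ht0.le⟩⟩ hg.norm
  set G := ‖g s₀‖ with hGdef
  have hGnn : 0 ≤ G := norm_nonneg _
  have hgle : ∀ s ∈ Set.Icc (0:ℝ) t₀, ‖g s‖ ≤ G := fun s hs => isMaxOn_iff.mp hmax s hs
  -- powers of t₀
  set P : ℝ := t₀ ^ ((2:ℤ) - 2*(l:ℤ)) with hPdef
  have hPpos : 0 < P := zpow_pos ht0 _
  set N1 : ℝ := t₀⁻¹ * ‖v₁‖ with hN1
  have hN1nn : 0 ≤ N1 := mul_nonneg (inv_nonneg.mpr ht0.le) (norm_nonneg _)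
  set S : ℝ := N1 + ‖v₂‖ + G with hSdef
  have hSnn : 0 ≤ S := by rw [hSdef]; linarith [norm_nonneg v₂]
  have hPSnn : 0 ≤ P * S := mul_nonneg hPpos.le hSnn
  have hgv2S : G + ‖v₂‖ ≤ S := by rw [hSdef]; linarith
  have hN1S : N1 ≤ S := by rw [hSdef]; linarith [norm_nonneg v₂]
  have hv2GS : ‖v₂‖ + 2*G ≤ 2*S := by rw [hSdef]; linarith [norm_nonneg v₂]
  clear_value G P N1 S
  have hPinv : P = (t₀ ^ (2*l-2 : ℕ))⁻¹ := by
    rw [hPdef, ← zpow_natCast t₀ (2*l-2), ← _root_.zpow_neg]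
    congr 1
    have h : ((2*l-2 : ℕ) : ℤ) = 2*(l:ℤ) - 2 := by
      push_cast [Nat.cast_sub (by omega : 2 ≤ 2*l)]; ring
    omega
  have hTP : 1 ≤ T^(2*l-2) * P := by
    rw [hPinv, ← div_eq_mul_inv, le_div_iff₀ (pow_pos ht0 _), one_mul]
    exact pow_le_pow_left₀ ht0.le htT _
  have hPq1 : t₀ ^ ((1:ℤ) - 2*(l:ℤ)) * ‖v₁‖ = P * N1 := by
    rw [hPdef, hN1, show ((1:ℤ)-2*(l:ℤ)) = ((2:ℤ)-2*(l:ℤ)) + (-1) by ring,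
      zpow_add₀ ht0.ne', _root_.zpow_neg_one]
    ring
  have hPqt : t₀ ^ ((1:ℤ) - 2*(l:ℤ)) * t₀ = P := by
    rw [hPdef, show ((2:ℤ)-2*(l:ℤ)) = ((1:ℤ)-2*(l:ℤ)) + 1 by ring, zpow_add₀ ht0.ne', _root_.zpow_one]
  have hPq0 : 0 ≤ t₀ ^ ((1:ℤ) - 2*(l:ℤ)) := (zpow_pos ht0 _).le
  -- bound on V
  have hV : ‖ctrlV A M t₀ v₂ g‖ ≤ CA * CM * (‖v₂‖ + 2*G) * t₀ := by
    have hb : ∀ r ∈ Set.uIoc (0:ℝ) t₀,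
        ‖mvE (NormedSpace.exp ((-r) • A) * M) (((t₀-r)/t₀) • v₂ - (r/t₀) • g t₀ + g r)‖
          ≤ CA * (CM * (‖v₂‖ + 2*G)) := by
      intro r hr
      rw [Set.uIoc_of_le ht0.le] at hr
      have hr0 : 0 < r := hr.1
      have hrt : r ≤ t₀ := hr.2
      have hw : ‖((t₀-r)/t₀) • v₂ - (r/t₀) • g t₀ + g r‖ ≤ ‖v₂‖ + 2*G := by
        have h1 : |(t₀-r)/t₀| ≤ 1 := by
          rw [abs_div, abs_of_pos ht0, abs_of_nonneg (by linarith : (0:ℝ) ≤ t₀ - r),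
            div_le_one ht0]
          linarith
        have h2 : |r/t₀| ≤ 1 := by
          rw [abs_div, abs_of_pos ht0, abs_of_nonneg hr0.le, div_le_one ht0]; linarith
        have hgt₀ : ‖g t₀‖ ≤ G := hgle t₀ ⟨ht0.le, le_refl _⟩
        have hgr : ‖g r‖ ≤ G := hgle r ⟨hr0.le, hrt⟩
        have e1 : |(t₀-r)/t₀| * ‖v₂‖ ≤ 1 * ‖v₂‖ :=
          mul_le_mul_of_nonneg_right h1 (norm_nonneg _)
        have e2 : |r/t₀| * ‖g t₀‖ ≤ 1 * G :=
          mul_le_mul h2 hgt₀ (norm_nonneg _) zero_le_one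
        calc ‖((t₀-r)/t₀) • v₂ - (r/t₀) • g t₀ + g r‖
            ≤ ‖((t₀-r)/t₀) • v₂ - (r/t₀) • g t₀‖ + ‖g r‖ := norm_add_le _ _
          _ ≤ ‖((t₀-r)/t₀) • v₂‖ + ‖(r/t₀) • g t₀‖ + ‖g r‖ := by
              linarith [norm_sub_le (((t₀-r)/t₀) • v₂) ((r/t₀) • g t₀)]
          _ ≤ ‖v₂‖ + 2*G := by
              rw [norm_smul, norm_smul, Real.norm_eq_abs, Real.norm_eq_abs]
              linarith
      have hA : opN (NormedSpace.exp ((-r) • A)) ≤ CA :=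
        hCA (-r) ⟨by linarith, by linarith⟩
      refine (norm_mvE_mul_le _ _ _).trans ?_
      exact mul_le_mul hA (mul_le_mul_of_nonneg_left hw hCMnn)
        (mul_nonneg hCMnn (norm_nonneg _)) hCA0.le
    have h := intervalIntegral.norm_integral_le_of_norm_le_const hb
    rw [sub_zero, abs_of_pos ht0] at h
    calc ‖ctrlV A M t₀ v₂ g‖ ≤ CA * (CM * (‖v₂‖ + 2*G)) * t₀ := h
      _ = CA * CM * (‖v₂‖ + 2*G) * t₀ := by ring
  -- bound on u
  have hu : ∀ s ∈ Set.Icc (0:ℝ) t₀, ‖ctrlU A M t₀ v₁ v₂ g s‖ ≤ Ku * (P * S) := by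
    intro s hs
    obtain ⟨hs0, hst⟩ := hs
    have hcoef1 : |s/t₀| ≤ 1 := by
      rw [abs_div, abs_of_pos ht0, abs_of_nonneg hs0, div_le_one ht0]; linarith
    have hcoef2 : |s*(t₀-s)/t₀^2| ≤ 1 := by
      rw [abs_div, abs_of_pos (pow_pos ht0 2), abs_of_nonneg (by nlinarith : (0:ℝ) ≤ s*(t₀-s)),
        div_le_one (pow_pos ht0 2)]
      nlinarith
    have hEexp : (NormedSpace.exp ((-s) • A))ᵀ = NormedSpace.exp ((-s) • Aᵀ) := by
      rw [← Matrix.exp_transpose, Matrix.transpose_smul]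
    have hY : ‖mvE (gramian A M t₀)⁻¹ (v₁ + ctrlV A M t₀ v₂ g)‖
        ≤ c₀ * t₀ ^ ((1:ℤ) - 2*(l:ℤ)) * (‖v₁‖ + ‖ctrlV A M t₀ v₂ g‖) := by
      refine (norm_mvE_clm_le _ _).trans ?_
      exact mul_le_mul hQn (norm_add_le _ _) (norm_nonneg _) (mul_nonneg hc₀.le hPq0)
    have hY2 : ‖mvE (gramian A M t₀)⁻¹ (v₁ + ctrlV A M t₀ v₂ g)‖
        ≤ c₀ * (P * N1 + CA*CM*(‖v₂‖+2*G)*P) := by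
      refine hY.trans ?_
      have h1 : c₀ * t₀ ^ ((1:ℤ) - 2*(l:ℤ)) * (‖v₁‖ + ‖ctrlV A M t₀ v₂ g‖)
          ≤ c₀ * t₀ ^ ((1:ℤ) - 2*(l:ℤ)) * (‖v₁‖ + CA*CM*(‖v₂‖+2*G)*t₀) :=
        mul_le_mul_of_nonneg_left (by linarith) (mul_nonneg hc₀.le hPq0)
      refine h1.trans (le_of_eq ?_)
      calc c₀ * t₀ ^ ((1:ℤ) - 2*(l:ℤ)) * (‖v₁‖ + CA*CM*(‖v₂‖+2*G)*t₀)
          = c₀ * (t₀ ^ ((1:ℤ) - 2*(l:ℤ)) * ‖v₁‖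
              + CA*CM*(‖v₂‖+2*G)*(t₀ ^ ((1:ℤ) - 2*(l:ℤ)) * t₀)) := by ring
        _ = c₀ * (P * N1 + CA*CM*(‖v₂‖+2*G)*P) := by rw [hPq1, hPqt]
    have hmv : ‖mvE (Mᵀ * (NormedSpace.exp ((-s) • A))ᵀ)
          (mvE (gramian A M t₀)⁻¹ (v₁ + ctrlV A M t₀ v₂ g))‖
        ≤ CMT * (CB * (c₀ * (P * N1 + CA*CM*(‖v₂‖+2*G)*P))) := by
      refine (norm_mvE_mul_le _ _ _).trans ?_
      rw [hEexp]
      refine mul_le_mul_of_nonneg_left ?_ hCMTnn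
      exact mul_le_mul (hCB (-s) ⟨by linarith, by linarith⟩) hY2 (norm_nonneg _) hCB0.le
    have hgt₀ : ‖g t₀‖ ≤ G := hgle t₀ ⟨ht0.le, le_refl _⟩
    have hgs : ‖g s‖ ≤ G := hgle s ⟨hs0, hst⟩
    have hα : ‖ctrlAlpha A M t₀ v₁ v₂ g s‖
        ≤ (G + ‖v₂‖) + CMT * (CB * (c₀ * (P * N1 + CA*CM*(‖v₂‖+2*G)*P))) := by
      simp only [ctrlAlpha]
      refine (norm_sub_le _ _).trans ?_
      rw [norm_neg, norm_smul, norm_smul, Real.norm_eq_abs, Real.norm_eq_abs]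
      have h1 : ‖g t₀ + v₂‖ ≤ G + ‖v₂‖ := (norm_add_le _ _).trans (by linarith)
      have e1 : |s/t₀| * ‖g t₀ + v₂‖ ≤ 1 * (G + ‖v₂‖) :=
        mul_le_mul hcoef1 h1 (norm_nonneg _) zero_le_one
      have e2 : |s*(t₀-s)/t₀^2| * ‖mvE (Mᵀ * (NormedSpace.exp ((-s) • A))ᵀ)
            (mvE (gramian A M t₀)⁻¹ (v₁ + ctrlV A M t₀ v₂ g))‖
          ≤ 1 * (CMT * (CB * (c₀ * (P * N1 + CA*CM*(‖v₂‖+2*G)*P)))) :=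
        mul_le_mul hcoef2 hmv (norm_nonneg _) zero_le_one
      linarith
    have q1 : 2*G + 2*‖v₂‖ ≤ 2*T^(2*l-2) * (P*S) := by
      have h3 : 1*S ≤ (T^(2*l-2)*P)*S := mul_le_mul_of_nonneg_right hTP hSnn
      nlinarith
    have q2 : CMT * (CB * (c₀ * (P * N1 + CA*CM*(‖v₂‖+2*G)*P)))
        ≤ (CMT*CB*c₀ + 2*(CMT*CB*c₀)*(CA*CM)) * (P*S) := by
      have a1 : P*N1 ≤ P*S := mul_le_mul_of_nonneg_left hN1S hPpos.le
      have a2 : (‖v₂‖+2*G)*P ≤ (2*S)*P := mul_le_mul_of_nonneg_right hv2GS hPpos.le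
      calc CMT * (CB * (c₀ * (P * N1 + CA*CM*(‖v₂‖+2*G)*P)))
          = CMT*CB*c₀*(P*N1) + CMT*CB*c₀*(CA*CM)*((‖v₂‖+2*G)*P) := by ring
        _ ≤ CMT*CB*c₀*(P*S) + CMT*CB*c₀*(CA*CM)*((2*S)*P) := by
            refine add_le_add (mul_le_mul_of_nonneg_left a1 hcnn)
              (mul_le_mul_of_nonneg_left a2 ?_)
            exact mul_nonneg hcnn (mul_nonneg hCA0.le hCMnn)
        _ = (CMT*CB*c₀ + 2*(CMT*CB*c₀)*(CA*CM)) * (P*S) := by ring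
    have hun : ‖ctrlU A M t₀ v₁ v₂ g s‖
        ≤ ‖ctrlAlpha A M t₀ v₁ v₂ g s‖ + ‖v₂‖ + ‖g s‖ := by
      simp only [ctrlU]
      refine (norm_add_le _ _).trans ?_
      linarith [norm_add_le (ctrlAlpha A M t₀ v₁ v₂ g s) v₂]
    rw [hKu]
    nlinarith [hPSnn]
  -- bound on z
  have hz : ‖ctrlZ A M t₀ v₁ v₂ g t‖ ≤ Kz * (P * S) := by
    obtain ⟨ht0', htt0⟩ := ht
    have h1 : ‖mvE (NormedSpace.exp (t • A)) v₁‖ ≤ CA * ‖v₁‖ :=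
      (norm_mvE_le _ _).trans
        (mul_le_mul_of_nonneg_right (hCA t ⟨by linarith, by linarith⟩) (norm_nonneg _))
    have hb : ∀ s ∈ Set.uIoc (0:ℝ) t,
        ‖mvE (NormedSpace.exp ((t - s) • A) * M) (ctrlU A M t₀ v₁ v₂ g s)‖
          ≤ CA * (CM * (Ku * (P*S))) := by
      intro s hs
      rw [Set.uIoc_of_le ht0'] at hs
      have hus : ‖ctrlU A M t₀ v₁ v₂ g s‖ ≤ Ku * (P*S) :=
        hu s ⟨hs.1.le, hs.2.trans htt0⟩
      refine (norm_mvE_mul_le _ _ _).trans ?_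
      refine mul_le_mul (hCA (t-s) ⟨by linarith [hs.1, hs.2], by linarith [hs.1, hs.2]⟩)
        (mul_le_mul_of_nonneg_left hus hCMnn)
        (mul_nonneg hCMnn (norm_nonneg _)) hCA0.le
    have h2 := intervalIntegral.norm_integral_le_of_norm_le_const hb
    rw [sub_zero, abs_of_nonneg ht0'] at h2
    have hXnn : 0 ≤ CA * (CM * (Ku * (P*S))) :=
      mul_nonneg hCA0.le (mul_nonneg hCMnn (mul_nonneg hKupos.le hPSnn))
    have h3 : CA * (CM * (Ku * (P*S))) * t ≤ CA * (CM * (Ku * (P*S))) * T := by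
      have htT' : t ≤ T := le_trans htt0 htT
      exact mul_le_mul_of_nonneg_left htT' hXnn
    have h4 : ‖ctrlZ A M t₀ v₁ v₂ g t‖
        ≤ ‖mvE (NormedSpace.exp (t • A)) v₁‖
          + ‖∫ s in (0:ℝ)..t, mvE (NormedSpace.exp ((t - s) • A) * M)
              (ctrlU A M t₀ v₁ v₂ g s)‖ := by
      simp only [ctrlZ]; exact norm_add_le _ _
    have h5 : CA * ‖v₁‖ ≤ CA*T*T^(2*l-2)*(P*S) := by
      have hv1 : ‖v₁‖ = t₀ * N1 := by rw [hN1]; field_simp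
      have h6 : N1 ≤ (T^(2*l-2)*P)*N1 := le_mul_of_one_le_left hN1nn hTP
      have h7 : (T^(2*l-2)*P)*N1 ≤ (T^(2*l-2)*P)*S :=
        mul_le_mul_of_nonneg_left hN1S (mul_nonneg hTnn hPpos.le)
      have h8 : t₀ * N1 ≤ T * (T^(2*l-2)*(P*S)) := by
        have h9 : t₀ * N1 ≤ T * N1 := mul_le_mul_of_nonneg_right htT hN1nn
        have h10 : T * N1 ≤ T * ((T^(2*l-2)*P)*S) :=
          mul_le_mul_of_nonneg_left (h6.trans h7) hT.le
        calc t₀ * N1 ≤ T * ((T^(2*l-2)*P)*S) := h9.trans h10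
          _ = T * (T^(2*l-2)*(P*S)) := by ring
      calc CA * ‖v₁‖ = CA * (t₀ * N1) := by rw [hv1]
        _ ≤ CA * (T * (T^(2*l-2)*(P*S))) := mul_le_mul_of_nonneg_left h8 hCA0.le
        _ = CA*T*T^(2*l-2)*(P*S) := by ring
    rw [hKz]
    have hfin := h4.trans (add_le_add h1 (h2.trans h3))
    nlinarith [hfin, h5]
  -- conclusion
  have hsupb : BddAbove ((fun s => ‖g s‖^2) '' Set.Icc 0 t₀) := by
    refine ⟨G^2, ?_⟩
    rintro x ⟨s, hsx, rfl⟩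
    exact pow_le_pow_left₀ (norm_nonneg _) (hgle s hsx) 2
  have hsup : G^2 ≤ sSup ((fun s => ‖g s‖^2) '' Set.Icc 0 t₀) := by
    rw [hGdef]
    exact le_csSup hsupb ⟨s₀, hs₀, rfl⟩
  have hRnn : 0 ≤ sSup ((fun s => ‖g s‖^2) '' Set.Icc 0 t₀) :=
    le_trans (by positivity) hsup
  have hzsq := pow_le_pow_left₀ (norm_nonneg (ctrlZ A M t₀ v₁ v₂ g t)) hz 2
  have husq := pow_le_pow_left₀ (norm_nonneg (ctrlU A M t₀ v₁ v₂ g t)) (hu t ht) 2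
  have hSsq : S^2 ≤ 3*(N1^2+‖v₂‖^2+G^2) := by
    rw [hSdef]; exact three_sq _ _ _
  have hP2 : P^2 = (t₀ ^ (4*(l-1)))⁻¹ := by
    rw [hPinv, ← inv_pow, ← pow_mul]
    have h : (2*l-2)*2 = 4*(l-1) := by omega
    rw [h, inv_pow]
  have hN1sq : t₀⁻¹^2 * ‖v₁‖^2 = N1^2 := by rw [hN1, mul_pow]
  rw [div_eq_mul_inv, ← hP2, hN1sq]
  have hXnn : 0 ≤ N1^2 + ‖v₂‖^2 + sSup ((fun s => ‖g s‖^2) '' Set.Icc 0 t₀) := by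
    have := sq_nonneg N1; have := sq_nonneg ‖v₂‖; linarith
  calc ‖ctrlZ A M t₀ v₁ v₂ g t‖^2 + ‖ctrlU A M t₀ v₁ v₂ g t‖^2
      ≤ (Kz*(P*S))^2 + (Ku*(P*S))^2 := add_le_add hzsq husq
    _ = (Kz^2+Ku^2)*P^2*S^2 := by ring
    _ ≤ (Kz^2+Ku^2)*P^2*(3*(N1^2+‖v₂‖^2+G^2)) :=
        mul_le_mul_of_nonneg_left hSsq (by positivity)
    _ = (3*(Kz^2+Ku^2))*P^2*(N1^2+‖v₂‖^2+G^2) := by ring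
    _ ≤ (3*(Kz^2+Ku^2))*P^2*(N1^2+‖v₂‖^2+sSup ((fun s => ‖g s‖^2) '' Set.Icc 0 t₀)) :=
        mul_le_mul_of_nonneg_left (by linarith) (by positivity)
    _ ≤ (3*(Kz^2+Ku^2)+1)*P^2*(N1^2+‖v₂‖^2+sSup ((fun s => ‖g s‖^2) '' Set.Icc 0 t₀)) := by
        refine mul_le_mul_of_nonneg_right ?_ hXnn
        refine mul_le_mul_of_nonneg_right ?_ (sq_nonneg P)
        linarith
end

section
/- Let μ and ν be probability measures on a measurable space (Ω, 𝔉), and let C ≥ 0 be a real number. Then the relative entropy satisfies Ent(ν|μ) ≤ C if and only if for every measurable function f : Ω → ℝ that is bounded above and bounded below by a positive constant (i.e. there exist 0 < δ ≤ K with δ ≤ f ≤ K), one has ∫ log f dν ≤ log( ∫ f dμ ) + C. -/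
/-!
`⇒` is the Donsker–Varadhan inequality `∫ g dν - log ∫ exp g dμ ≤ ∫ log (dν/dμ) dν` for
`g = log f`, which is Gibbs' inequality for `ν` against the tilted measure `μ.tilted g`.

`⇐`: testing against `exp (a • 𝟙_t)` for a `μ`-null set `t` shows `ν ≪ μ`. Then, with
`R = dν/dμ`, the test functions `min R (n + 1) + 1 / (n + 1)` have `μ`-integral at most
`1 + 1 / (n + 1)`, so `∫ log (min R (n + 1) + 1 / (n + 1)) dν ≤ 1 / (n + 1) + C`. They converge
to `R` and are bounded below by `min R 1`, whose logarithm is `ν`-integrable because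
`x log x ≥ -1`; Fatou's lemma gives `∫ log R dν ≤ C`.
-/

open MeasureTheory
open scoped ENNReal Classical

/-- The relative entropy (Kullback–Leibler divergence) `Ent(ν|μ) ∈ [0,∞]`, defined as
`∫ log (dν/dμ) dν` when `ν ≪ μ` and this integral exists (in the sense of Bochner
integrability), and `+∞` otherwise. -/
noncomputable def relEnt {Ω : Type*} [MeasurableSpace Ω] (ν μ : Measure Ω) : ℝ≥0∞ :=
  if ν ≪ μ ∧ Integrable (fun ω => Real.log (ν.rnDeriv μ ω).toReal) ν
  then ENNReal.ofReal (∫ ω, Real.log (ν.rnDeriv μ ω).toReal ∂ν)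
  else ⊤

open Real Filter Topology

lemma mul_log_min_one_mem_Icc {x : ℝ} (hx : 0 ≤ x) : x * log (min x 1) ∈ Set.Icc (-1) 0 := by
  rcases le_total x 1 with hx1 | hx1
  · rw [min_eq_left hx1]
    exact ⟨by linarith [self_sub_one_le_mul_log hx], mul_log_nonpos hx hx1⟩
  · simp [min_eq_right hx1]

namespace MeasureTheory

variable {α : Type*} [MeasurableSpace α] {μ ν : Measure α}

lemma integrable_log_of_mem_Icc [IsFiniteMeasure μ] {f : α → ℝ} {δ K : ℝ}
    (hf : Measurable f) (hδ : 0 < δ) (hbd : ∀ x, δ ≤ f x ∧ f x ≤ K) :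
    Integrable (fun x => log (f x)) μ :=
  .of_mem_Icc (log δ) (log K) hf.log.aemeasurable <| ae_of_all _ fun x =>
    ⟨log_le_log hδ (hbd x).1, log_le_log (hδ.trans_le (hbd x).1) (hbd x).2⟩

lemma integrable_and_integral_le_of_tendsto {F : ℕ → α → ℝ} {f : α → ℝ} {c : ℕ → ℝ} {c₀ : ℝ}
    (hF : ∀ n, Integrable (F n) μ) (hF_nonneg : ∀ n, 0 ≤ᵐ[μ] F n)
    (hFf : ∀ᵐ x ∂μ, Tendsto (fun n => F n x) atTop (𝓝 (f x)))
    (hFc : ∀ n, ∫ x, F n x ∂μ ≤ c n) (hc : Tendsto c atTop (𝓝 c₀)) :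
    Integrable f μ ∧ ∫ x, f x ∂μ ≤ c₀ := by
  have hf_nonneg : 0 ≤ᵐ[μ] f := by
    filter_upwards [hFf, ae_all_iff.2 hF_nonneg] with x hx h0 using ge_of_tendsto' hx h0
  have hf_meas : AEStronglyMeasurable f μ :=
    aestronglyMeasurable_of_tendsto_ae _ (fun n => (hF n).1) hFf
  have hc₀ : 0 ≤ c₀ :=
    ge_of_tendsto' hc fun n => (integral_nonneg_of_ae (hF_nonneg n)).trans (hFc n)
  have hlint : ∫⁻ x, ENNReal.ofReal (f x) ∂μ ≤ ENNReal.ofReal c₀ := calc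
    ∫⁻ x, ENNReal.ofReal (f x) ∂μ
        = ∫⁻ x, liminf (fun n => ENNReal.ofReal (F n x)) atTop ∂μ := by
          refine lintegral_congr_ae ?_
          filter_upwards [hFf] with x hx
          exact ((ENNReal.continuous_ofReal.tendsto _).comp hx).liminf_eq.symm
    _ ≤ liminf (fun n => ∫⁻ x, ENNReal.ofReal (F n x) ∂μ) atTop :=
          lintegral_liminf_le' fun n => (hF n).1.aemeasurable.ennreal_ofReal
    _ = liminf (fun n => ENNReal.ofReal (∫ x, F n x ∂μ)) atTop := by
          simp_rw [ofReal_integral_eq_lintegral_ofReal (hF _) (hF_nonneg _)]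
    _ ≤ liminf (fun n => ENNReal.ofReal (c n)) atTop :=
          liminf_le_liminf (.of_forall fun n => ENNReal.ofReal_le_ofReal (hFc n))
    _ = ENNReal.ofReal c₀ := ((ENNReal.continuous_ofReal.tendsto _).comp hc).liminf_eq
  refine ⟨⟨hf_meas, (hasFiniteIntegral_iff_ofReal hf_nonneg).2
    (hlint.trans_lt ENNReal.ofReal_lt_top)⟩, ?_⟩
  rw [integral_eq_lintegral_of_nonneg_ae hf_nonneg hf_meas]
  exact ENNReal.toReal_le_of_le_ofReal hc₀ hlint

lemma integral_sub_log_integral_exp_le_integral_llr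
    [IsProbabilityMeasure μ] [IsProbabilityMeasure ν] (hνμ : ν ≪ μ)
    (h_int : Integrable (llr ν μ) ν) {g : α → ℝ} (hgν : Integrable g ν)
    (hgμ : Integrable (fun x => exp (g x)) μ) :
    ∫ x, g x ∂ν - log (∫ x, exp (g x) ∂μ) ≤ ∫ x, llr ν μ x ∂ν := by
  have := isProbabilityMeasure_tilted hgμ
  have h_gibbs := InformationTheory.integral_llr_add_sub_measure_univ_nonneg
    (hνμ.trans (absolutelyContinuous_tilted hgμ))
    (integrable_llr_tilted_right hνμ hgν h_int hgμ)
  rw [integral_llr_tilted_right hνμ hgν hgμ h_int] at h_gibbs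
  simp only [probReal_univ] at h_gibbs
  linarith

lemma integrable_log_min_toReal_rnDeriv_one [IsFiniteMeasure μ] [SigmaFinite ν] (hνμ : ν ≪ μ) :
    Integrable (fun x => log (min (ν.rnDeriv μ x).toReal 1)) ν := by
  rw [← integrable_rnDeriv_smul_iff hνμ]
  exact .of_mem_Icc (-1) 0
    (by fun_prop (disch := exact Measure.measurable_rnDeriv ν μ))
    (ae_of_all _ fun x => mul_log_min_one_mem_Icc ENNReal.toReal_nonneg)

end MeasureTheory

section

variable {Ω : Type*} [MeasurableSpace Ω] {μ ν : Measure Ω}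

lemma relEnt_le_ofReal_iff {C : ℝ} (hC : 0 ≤ C) :
    relEnt ν μ ≤ ENNReal.ofReal C ↔
      ν ≪ μ ∧ Integrable (llr ν μ) ν ∧ ∫ ω, llr ν μ ω ∂ν ≤ C := by
  rw [relEnt]
  split_ifs with h
  · rw [ENNReal.ofReal_le_ofReal_iff hC]
    exact ⟨fun hle => ⟨h.1, h.2, hle⟩, fun h' => h'.2.2⟩
  · simp only [top_le_iff, ENNReal.ofReal_ne_top, false_iff]
    exact fun h' => h ⟨h'.1, h'.2.1⟩

variable [IsProbabilityMeasure μ] [IsProbabilityMeasure ν]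

lemma integral_log_le_log_integral_add_integral_llr (hνμ : ν ≪ μ)
    (h_int : Integrable (llr ν μ) ν) {f : Ω → ℝ} {δ K : ℝ} (hf : Measurable f) (hδ : 0 < δ)
    (hbd : ∀ ω, δ ≤ f ω ∧ f ω ≤ K) :
    ∫ ω, log (f ω) ∂ν ≤ log (∫ ω, f ω ∂μ) + ∫ ω, llr ν μ ω ∂ν := by
  have h_exp_log : ∀ ω, exp (log (f ω)) = f ω := fun ω => exp_log (hδ.trans_le (hbd ω).1)
  have := integral_sub_log_integral_exp_le_integral_llr hνμ h_int
    (integrable_log_of_mem_Icc hf hδ hbd)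
    (by simpa only [h_exp_log] using Integrable.of_mem_Icc δ K hf.aemeasurable (ae_of_all _ hbd))
  simp only [h_exp_log] at this
  linarith

def LogTestBound (μ ν : Measure Ω) (C : ℝ) : Prop :=
  ∀ f : Ω → ℝ, Measurable f →
    (∃ δ K : ℝ, 0 < δ ∧ δ ≤ K ∧ ∀ ω, δ ≤ f ω ∧ f ω ≤ K) →
    ∫ ω, log (f ω) ∂ν ≤ log (∫ ω, f ω ∂μ) + C

lemma LogTestBound.absolutelyContinuous {C : ℝ} (hC : 0 ≤ C) (h : LogTestBound μ ν C) :
    ν ≪ μ := by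
  refine Measure.AbsolutelyContinuous.mk fun t ht hμt => ?_
  by_contra hνt
  have hνt_pos : 0 < ν.real t := ENNReal.toReal_pos hνt (measure_ne_top ν t)
  set a := (C + 1) / ν.real t
  have ha : 0 ≤ a := by positivity
  -- `exp (a • 𝟙_t)` is `1` `μ`-a.e., but its logarithm has `ν`-integral `C + 1`.
  set f : Ω → ℝ := fun ω => exp (t.indicator (fun _ => a) ω)
  have hf_bd : ∀ ω, 1 ≤ f ω ∧ f ω ≤ exp a := fun ω => by
    by_cases hω : ω ∈ t <;> simp [f, hω, ha]
  have hμf : ∫ ω, f ω ∂μ = 1 := by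
    rw [integral_congr_ae (g := fun _ => 1)]
    · simp
    filter_upwards [measure_eq_zero_iff_ae_notMem.mp hμt] with ω hω
    simp [f, hω]
  have hνf : ∫ ω, log (f ω) ∂ν = C + 1 := by
    simp only [f, log_exp, integral_indicator_const _ ht, smul_eq_mul, a]
    field_simp
  have := h f (measurable_const.indicator ht).exp ⟨1, exp a, one_pos, one_le_exp ha, hf_bd⟩
  rw [hμf, hνf, log_one] at this
  linarith

lemma LogTestBound.integral_log_min_toReal_rnDeriv_add_le {C : ℝ} (h : LogTestBound μ ν C)
    (hνμ : ν ≪ μ) {M ε : ℝ} (hM : 0 ≤ M) (hε : 0 < ε) :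
    ∫ ω, log (min (ν.rnDeriv μ ω).toReal M + ε) ∂ν ≤ ε + C := by
  set R : Ω → ℝ := fun ω => (ν.rnDeriv μ ω).toReal
  set f : Ω → ℝ := fun ω => min (R ω) M + ε
  have hf : Measurable f := ((Measure.measurable_rnDeriv ν μ).ennreal_toReal.min
    measurable_const).add_const ε
  have hf_bd : ∀ ω, ε ≤ f ω ∧ f ω ≤ M + ε := fun ω =>
    ⟨le_add_of_nonneg_left (le_min ENNReal.toReal_nonneg hM), by simp [f]⟩
  have hf_int : Integrable f μ := .of_mem_Icc ε (M + ε) hf.aemeasurable (ae_of_all _ hf_bd)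
  have hμf : ∫ ω, f ω ∂μ ≤ 1 + ε := calc
    ∫ ω, f ω ∂μ ≤ ∫ ω, (R ω + ε) ∂μ :=
      integral_mono hf_int (Measure.integrable_toReal_rnDeriv.add (integrable_const ε))
        fun ω => add_le_add_left (min_le_left _ _) ε
    _ = 1 + ε := by
      rw [integral_add Measure.integrable_toReal_rnDeriv (integrable_const ε),
        Measure.integral_toReal_rnDeriv hνμ]
      simp
  have hμf_pos : 0 < ∫ ω, f ω ∂μ := by
    have := integral_mono (integrable_const ε) hf_int fun ω => (hf_bd ω).1
    simp only [integral_const, probReal_univ, smul_eq_mul, one_mul] at this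
    linarith
  have hlog : log (∫ ω, f ω ∂μ) ≤ ε := calc
    log (∫ ω, f ω ∂μ) ≤ log (1 + ε) := log_le_log hμf_pos hμf
    _ ≤ ε := by linarith [log_le_sub_one_of_pos (by linarith : (0 : ℝ) < 1 + ε)]
  linarith [h f hf ⟨ε, M + ε, hε, by linarith, hf_bd⟩]

lemma LogTestBound.integrable_llr_and_integral_le {C : ℝ} (h : LogTestBound μ ν C)
    (hνμ : ν ≪ μ) : Integrable (llr ν μ) ν ∧ ∫ ω, llr ν μ ω ∂ν ≤ C := by
  set R : Ω → ℝ := fun ω => (ν.rnDeriv μ ω).toReal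
  set L : Ω → ℝ := fun ω => log (min (R ω) 1)
  have hL : Integrable L ν := integrable_log_min_toReal_rnDeriv_one hνμ
  have hR_pos : ∀ᵐ ω ∂ν, 0 < R ω := by
    filter_upwards [Measure.rnDeriv_pos hνμ, hνμ.ae_le (Measure.rnDeriv_lt_top ν μ)]
      with ω h0 hlt using ENNReal.toReal_pos h0.ne' hlt.ne
  set ε : ℕ → ℝ := fun n => 1 / ((n : ℝ) + 1)
  have hε : ∀ n, 0 < ε n := fun n => by positivity
  set F : ℕ → Ω → ℝ := fun n ω => log (min (R ω) (n + 1) + ε n) - L ω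
  have hF_int : ∀ n, Integrable (F n) ν := fun n =>
    (integrable_log_of_mem_Icc (((Measure.measurable_rnDeriv ν μ).ennreal_toReal.min
      measurable_const).add_const _) (hε n) (K := n + 1 + ε n)
      fun ω => ⟨le_add_of_nonneg_left (le_min ENNReal.toReal_nonneg (by positivity)),
        by simp⟩).sub hL
  have hF_nonneg : ∀ n, 0 ≤ᵐ[ν] F n := fun n => by
    filter_upwards [hR_pos] with ω hω
    refine sub_nonneg.2 (log_le_log (lt_min hω one_pos) ?_)
    have : (1 : ℝ) ≤ n + 1 := by simp
    linarith [min_le_min_left (R ω) this, hε n]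
  have hF_lim : ∀ᵐ ω ∂ν, Tendsto (fun n => F n ω) atTop (𝓝 (llr ν μ ω - L ω)) := by
    filter_upwards [hR_pos] with ω hω
    have h_min : Tendsto (fun n : ℕ => min (R ω) (n + 1)) atTop (𝓝 (R ω)) :=
      tendsto_atTop_of_eventually_const (i₀ := ⌈R ω⌉₊) fun n hn =>
        min_eq_left (by linarith [Nat.ceil_le.1 hn])
    have h_sum := h_min.add tendsto_one_div_add_atTop_nhds_zero_nat
    rw [add_zero] at h_sum
    exact (h_sum.log hω.ne').sub_const (L ω)
  have hF_le : ∀ n, ∫ ω, F n ω ∂ν ≤ ε n + C - ∫ ω, L ω ∂ν := fun n => by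
    rw [integral_sub ((hF_int n).add hL |>.congr (.of_forall fun ω => by simp [F])) hL]
    linarith [h.integral_log_min_toReal_rnDeriv_add_le hνμ (M := n + 1) (by positivity) (hε n)]
  obtain ⟨h_int, h_le⟩ := integrable_and_integral_le_of_tendsto hF_int hF_nonneg hF_lim hF_le
    ((tendsto_one_div_add_atTop_nhds_zero_nat.add_const C).sub_const (∫ ω, L ω ∂ν))
  have h_llr : Integrable (llr ν μ) ν := (h_int.add hL).congr (.of_forall fun ω => by simp)
  rw [integral_sub h_llr hL] at h_le
  simp only [zero_add] at h_le
  exact ⟨h_llr, by linarith⟩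

end

/-- for probability measures `μ, ν` and `C ≥ 0`, one has `Ent(ν|μ) ≤ C`
if and only if, for every measurable `f` bounded above and bounded below by a positive
constant, `∫ log f dν ≤ log (∫ f dμ) + C`. -/
theorem stmt_11 {Ω : Type*} [MeasurableSpace Ω] (μ ν : Measure Ω)
    [IsProbabilityMeasure μ] [IsProbabilityMeasure ν] (C : ℝ) (hC : 0 ≤ C) :
    relEnt ν μ ≤ ENNReal.ofReal C ↔
      ∀ f : Ω → ℝ, Measurable f →
        (∃ δ K : ℝ, 0 < δ ∧ δ ≤ K ∧ ∀ ω, δ ≤ f ω ∧ f ω ≤ K) →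
        ∫ ω, Real.log (f ω) ∂ν ≤ Real.log (∫ ω, f ω ∂μ) + C := by
  rw [relEnt_le_ofReal_iff hC]
  constructor
  · rintro ⟨hνμ, h_int, h_le⟩ f hf ⟨δ, K, hδ, -, hbd⟩
    linarith [integral_log_le_log_integral_add_integral_llr hνμ h_int hf hδ hbd]
  · intro h
    have hνμ : ν ≪ μ := LogTestBound.absolutelyContinuous hC h
    exact ⟨hνμ, LogTestBound.integrable_llr_and_integral_le h hνμ⟩
end
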